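/- arXiv:2111.07182 — 9 statements merged into one kernel-verified Lean document; each statement's English description precedes it below -/
import Mathlib

section
/- A real univariate polynomial p belongs to 𝒫 if and only if there exist real polynomials e, f, g, h such that p(x) = x·(e(x)² + f(x)²) for all real x and p(x) = 1 − (1−x)·(g(x)² + h(x)²) for all real x. (Equivalently, there exist odd polynomials c, d with p(x) = c(√x)² + d(√x)² for all x ≥ 0, and odd polynomials a, b with p(x) = 1 − a(√(1−x))² − b(√(1−x))² for all x ≤ 1.) -/
open Polynomial

/-- 𝒫: real polynomials with p([0,1]) ⊆ [0,1], p ≤ 0 on (-∞,0], p ≥ 1 on [1,∞). -/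
def memP (p : Polynomial ℝ) : Prop :=
  (∀ x ∈ Set.Icc (0:ℝ) 1, p.eval x ∈ Set.Icc (0:ℝ) 1) ∧
  (∀ x : ℝ, x ≤ 0 → p.eval x ≤ 0) ∧
  (∀ x : ℝ, 1 ≤ x → 1 ≤ p.eval x)


lemma nonneg_of_nonneg_off (s : ℝ[X]) (a : ℝ) (h : ∀ x, x ≠ a → 0 ≤ s.eval x) :
    ∀ x, 0 ≤ s.eval x := by
  intro x
  rcases eq_or_ne x a with rfl | hx
  · have hcont : Filter.Tendsto (fun y => s.eval y) (nhdsWithin x {x}ᶜ) (nhds (s.eval x)) :=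
      (s.continuous_aeval).continuousAt.continuousWithinAt
    exact ge_of_tendsto hcont
      (Filter.eventually_of_mem self_mem_nhdsWithin fun y hy => h y hy)
  · exact h x hx

lemma sq_dvd_of_root (r : ℝ[X]) (hr : ∀ x, 0 ≤ r.eval x) (a : ℝ) (ha : r.eval a = 0) :
    (X - C a)^2 ∣ r := by
  have hd : r.derivative.eval a = 0 := by
    have hmin : IsLocalMin (fun x => r.eval x) a := by
      apply IsMinOn.isLocalMin (s := Set.univ) (isMinOn_iff.2 fun x _ => ?_) Filter.univ_mem
      simpa [ha] using hr x
    have := hmin.deriv_eq_zero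
    rwa [Polynomial.deriv] at this
  rcases eq_or_ne r 0 with rfl | hr0
  · exact dvd_zero _
  have h2 : 2 ≤ r.rootMultiplicity a := by
    rw [Nat.succ_le_iff]
    apply lt_rootMultiplicity_of_isRoot_iterate_derivative_of_mem_nonZeroDivisors' hr0 ?_ ?_
    · intro m hm
      interval_cases m
      · exact ha
      · simpa using hd
    · simp [mem_nonZeroDivisors_iff_ne_zero]
  exact dvd_trans (pow_dvd_pow _ h2) (r.pow_rootMultiplicity_dvd a)

lemma sos_aux : ∀ n : ℕ, ∀ r : ℝ[X], r.natDegree ≤ n → (∀ x, 0 ≤ r.eval x) →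
    ∃ e f : ℝ[X], r = e^2 + f^2 := by
  intro n
  induction n using Nat.strong_induction_on with
  | _ n ih =>
    intro r hdeg hr
    rcases eq_or_ne r 0 with rfl | hr0
    · exact ⟨0, 0, by ring⟩
    rcases Nat.eq_zero_or_pos r.natDegree with h0 | hpos
    · obtain ⟨c, rfl⟩ := natDegree_eq_zero.1 h0
      have hc : 0 ≤ c := by simpa using hr 0
      exact ⟨C (Real.sqrt c), 0, by rw [← C_pow, Real.sq_sqrt hc]; ring⟩
    obtain ⟨z, hz⟩ : ∃ z : ℂ, aeval z r = 0 :=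
      IsAlgClosed.exists_aeval_eq_zero ℂ r (natDegree_pos_iff_degree_pos.1 hpos).ne'
    rcases eq_or_ne z.im 0 with him | him
    · -- real root a = z.re
      set a := z.re with ha_def
      have hza : z = (a : ℂ) := Complex.ext rfl (by simpa using him)
      have hra : r.eval a = 0 := by
        rw [hza] at hz
        erw [aeval_ofReal] at hz
        have : ((r.eval a : ℝ) : ℂ) = 0 := hz
        exact_mod_cast this
      obtain ⟨s, hs⟩ := sq_dvd_of_root r hr a hra
      have hsne : s ≠ 0 := by rintro rfl; simp at hs; exact hr0 hs
      have hsnn : ∀ x, 0 ≤ s.eval x := by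
        apply nonneg_of_nonneg_off s a
        intro x hx
        have h1 : 0 ≤ (x - a)^2 * s.eval x := by
          have := hr x; rw [hs] at this; simpa using this
        have h2 : (0:ℝ) < (x - a)^2 := by
          have : x - a ≠ 0 := sub_ne_zero.2 hx
          positivity
        nlinarith
      have hdegs : s.natDegree < n := by
        have h1 : ((X - C a)^2).natDegree = 2 := by
          simp [natDegree_pow]
        have h2 : r.natDegree = 2 + s.natDegree := by
          rw [hs, natDegree_mul (by apply pow_ne_zero; exact X_sub_C_ne_zero a) hsne, h1]
        omega
      obtain ⟨e, f, hef⟩ := ih s.natDegree hdegs s le_rfl hsnn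
      exact ⟨(X - C a) * e, (X - C a) * f, by rw [hs, hef]; ring⟩
    · -- complex root: quadratic factor
      set a := z.re
      set b := z.im
      obtain ⟨s, hs⟩ := r.quadratic_dvd_of_aeval_eq_zero_im_ne_zero hz him
      set q : ℝ[X] := X ^ 2 - C (2 * z.re) * X + C (‖z‖ ^ 2) with hq_def
      have hqeval : ∀ x, q.eval x = (x - a)^2 + b^2 := by
        intro x
        have hnorm : ‖z‖^2 = a^2 + b^2 := by
          rw [Complex.sq_norm, Complex.normSq_apply]; ring
        rw [hq_def]
        simp only [eval_add, eval_sub, eval_pow, eval_mul, eval_X, eval_C]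
        rw [hnorm]; ring
      have hqpos : ∀ x, 0 < q.eval x := by
        intro x; rw [hqeval]
        have : b ≠ 0 := him
        positivity
      have hqne : q ≠ 0 := fun h => by simpa [h] using hqpos 0
      have hsne : s ≠ 0 := by rintro rfl; simp at hs; exact hr0 hs
      have hsnn : ∀ x, 0 ≤ s.eval x := by
        intro x
        have h1 : 0 ≤ q.eval x * s.eval x := by
          have := hr x; rw [hs] at this; simpa using this
        nlinarith [hqpos x]
      have hqdeg : q.natDegree = 2 := by
        rw [hq_def]
        compute_degree!
      have hdegs : s.natDegree < n := by
        have h2 : r.natDegree = 2 + s.natDegree := by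
          rw [hs, natDegree_mul hqne hsne, hqdeg]
        omega
      obtain ⟨e, f, hef⟩ := ih s.natDegree hdegs s le_rfl hsnn
      refine ⟨(X - C a) * e + C b * f, (X - C a) * f - C b * e, ?_⟩
      have hq2 : q = (X - C a)^2 + (C b)^2 := by
        have hnorm : ‖z‖^2 = a^2 + b^2 := by
          rw [Complex.sq_norm, Complex.normSq_apply]; ring
        rw [hq_def, hnorm]
        simp only [C_add, C_mul, C_pow, map_ofNat]
        ring
      rw [hs, hef, hq2]; ring

lemma sos (r : ℝ[X]) (hr : ∀ x, 0 ≤ r.eval x) : ∃ e f : ℝ[X], r = e^2 + f^2 :=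
  sos_aux r.natDegree r le_rfl hr

theorem stmt_0 (p : Polynomial ℝ) :
    memP p ↔
    ∃ e f g h : Polynomial ℝ,
      (∀ x : ℝ, p.eval x = x * (e.eval x ^ 2 + f.eval x ^ 2)) ∧
      (∀ x : ℝ, p.eval x = 1 - (1 - x) * (g.eval x ^ 2 + h.eval x ^ 2)) := by
  constructor
  · rintro ⟨h1, h2, h3⟩
    -- eval 0 = 0
    have hp0 : p.eval 0 = 0 :=
      le_antisymm (h2 0 le_rfl) (h1 0 ⟨le_rfl, zero_le_one⟩).1
    have hp1 : p.eval 1 = 1 :=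
      le_antisymm (h1 1 ⟨zero_le_one, le_rfl⟩).2 (h3 1 le_rfl)
    -- first representation
    obtain ⟨r, hr⟩ : X ∣ p := by
      have := (dvd_iff_isRoot (p := p) (a := 0)).2 hp0
      simpa using this
    have hrnn : ∀ x, 0 ≤ r.eval x := by
      apply nonneg_of_nonneg_off r 0
      intro x hx
      have hev : p.eval x = x * r.eval x := by rw [hr]; simp
      rcases lt_or_gt_of_ne hx with hneg | hpos
      · have := h2 x hneg.le
        rw [hev] at this
        nlinarith
      · have hpx : 0 ≤ p.eval x := by
          rcases le_or_gt x 1 with hle | hgt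
          · exact (h1 x ⟨hpos.le, hle⟩).1
          · linarith [h3 x hgt.le]
        rw [hev] at hpx
        nlinarith
    obtain ⟨e, f, hef⟩ := sos r hrnn
    -- second representation
    have hq0 : (1 - p).eval 1 = 0 := by simp [hp1]
    obtain ⟨t, ht⟩ : (X - C 1) ∣ (1 - p) := (dvd_iff_isRoot).2 hq0
    have htnn : ∀ x, 0 ≤ (-t).eval x := by
      apply nonneg_of_nonneg_off (-t) 1
      intro x hx
      have hev : 1 - p.eval x = (x - 1) * t.eval x := by
        have := congrArg (eval x) ht
        simpa using this
      simp only [eval_neg]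
      rcases lt_or_gt_of_ne hx with hlt | hgt
      · have hple : p.eval x ≤ 1 := by
          rcases le_or_gt 0 x with hge | hneg
          · exact (h1 x ⟨hge, hlt.le⟩).2
          · linarith [h2 x hneg.le]
        nlinarith
      · have := h3 x hgt.le
        nlinarith
    obtain ⟨g, h, hgh⟩ := sos (-t) htnn
    refine ⟨e, f, g, h, fun x => ?_, fun x => ?_⟩
    · have : r.eval x = e.eval x ^ 2 + f.eval x ^ 2 := by rw [hef]; simp
      rw [hr]; simp [this]
    · have hth : t.eval x = -(g.eval x ^ 2 + h.eval x ^ 2) := by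
        have := congrArg (eval x) hgh
        simp at this
        linarith
      have hev : 1 - p.eval x = (x - 1) * t.eval x := by
        have := congrArg (eval x) ht
        simpa using this
      rw [hth] at hev
      linarith [hev]  -- p x = 1 - (1-x)(g²+h²)
  · rintro ⟨e, f, g, h, hef, hgh⟩
    refine ⟨fun x hx => ⟨?_, ?_⟩, fun x hx => ?_, fun x hx => ?_⟩
    · rw [hef x]
      exact mul_nonneg hx.1 (by positivity)
    · rw [hgh x]
      nlinarith [sq_nonneg (g.eval x), sq_nonneg (h.eval x), hx.2]
    · rw [hef x]
      exact mul_nonpos_of_nonpos_of_nonneg hx (by positivity)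
    · rw [hgh x]
      nlinarith [sq_nonneg (g.eval x), sq_nonneg (h.eval x)]
end

section
/- A real univariate polynomial q belongs to 𝒬 if and only if there exist real polynomials e, f, g, h such that q(x) = x(1−x)·(e(x)² + f(x)²) for all real x and q(x) = 1 − g(x)² − h(x)² for all real x. (Equivalently, there exist even polynomials c, d with q(x) = x(1−x)(c(√x)² + d(√x)²) for all x ≥ 0, and even polynomials a, b with q(x) = 1 − a(√x)² − b(√x)² for all x ≥ 0.) -/
open Polynomial

/-- 𝒬: real polynomials with q([0,1]) ⊆ [0,1], q ≤ 0 on (-∞,0], q ≤ 0 on [1,∞). -/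
def memQ (q : Polynomial ℝ) : Prop :=
  (∀ x ∈ Set.Icc (0:ℝ) 1, q.eval x ∈ Set.Icc (0:ℝ) 1) ∧
  (∀ x : ℝ, x ≤ 0 → q.eval x ≤ 0) ∧
  (∀ x : ℝ, 1 ≤ x → q.eval x ≤ 0)

-- density lemma
lemma nonneg_of_ne (s : Polynomial ℝ) (a b : ℝ)
    (h : ∀ x : ℝ, x ≠ a → x ≠ b → 0 ≤ s.eval x) : ∀ x : ℝ, 0 ≤ s.eval x := by
  intro x
  have hclosed : IsClosed {y : ℝ | 0 ≤ s.eval y} :=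
    isClosed_le continuous_const s.continuous
  have hcount : (({a, b} : Set ℝ)).Countable := (Set.finite_singleton b |>.insert a).countable
  have hd : Dense (({a, b} : Set ℝ)ᶜ) := hcount.dense_compl ℝ
  have hsub : (({a, b} : Set ℝ)ᶜ) ⊆ {y : ℝ | 0 ≤ s.eval y} := by
    intro y hy
    simp only [Set.mem_compl_iff, Set.mem_insert_iff, Set.mem_singleton_iff, not_or] at hy
    exact h y hy.1 hy.2
  have := hclosed.closure_subset_iff.mpr hsub
  exact this (hd x)

lemma sos_of_nonneg : ∀ n : ℕ, ∀ p : Polynomial ℝ, p.natDegree = n →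
    (∀ x : ℝ, 0 ≤ p.eval x) → ∃ a b : Polynomial ℝ, p = a ^ 2 + b ^ 2 := by
  intro n
  induction n using Nat.strong_induction_on with
  | _ n ih =>
    intro p hdeg hp
    by_cases hp0 : p = 0
    · exact ⟨0, 0, by simp [hp0]⟩
    by_cases hd0 : p.natDegree = 0
    · obtain ⟨c, rfl⟩ := natDegree_eq_zero.mp hd0
      have hc : 0 ≤ c := by simpa using hp 0
      exact ⟨C (Real.sqrt c), 0, by
        rw [← C_pow, Real.sq_sqrt hc]; ring⟩
    -- degree ≥ 1 : find a complex root
    have hdpos : 0 < (p.map (algebraMap ℝ ℂ)).degree := by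
      rw [degree_map]
      exact natDegree_pos_iff_degree_pos.mp (Nat.pos_of_ne_zero hd0)
    obtain ⟨z, hz⟩ := Complex.exists_root hdpos
    by_cases him : z.im = 0
    · -- real root r = z.re, double root
      set r := z.re with hr
      have hzr : z = (r : ℂ) := Complex.ext rfl him
      have hroot : p.eval r = 0 := by
        have : (p.map (algebraMap ℝ ℂ)).eval ((algebraMap ℝ ℂ) r) = (algebraMap ℝ ℂ) (p.eval r) := by
          rw [eval_map, eval₂_at_apply]
        rw [hzr] at hz
        have h0 : (algebraMap ℝ ℂ) (p.eval r) = 0 := by rw [← this]; exact hz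
        simpa using h0
      -- derivative vanishes at r
      have hmin : IsLocalMin (fun x => p.eval x) r := by
        apply Filter.Eventually.of_forall
        intro x; simpa [hroot] using hp x
      have hderiv : (derivative p).eval r = 0 := by
        have := hmin.deriv_eq_zero
        rwa [Polynomial.deriv] at this
      obtain ⟨q1, hq1⟩ : (X - C r) ^ 2 ∣ p := by
        obtain ⟨q, hq⟩ := dvd_iff_isRoot.mpr hroot
        have hq_root : q.eval r = 0 := by
          have hd : derivative p = q + (X - C r) * derivative q := by
            rw [hq]; rw [derivative_mul]; simp
          have := hderiv
          rw [hd] at this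
          simpa using this
        obtain ⟨q1, hq1⟩ := dvd_iff_isRoot.mpr hq_root
        exact ⟨q1, by rw [hq, hq1]; ring⟩
      have hq1ne : q1 ≠ 0 := by rintro rfl; exact hp0 (by simp [hq1])
      have hq1deg : q1.natDegree < n := by
        have h2 : ((X - C r) ^ 2 : Polynomial ℝ) ≠ 0 := pow_ne_zero _ (X_sub_C_ne_zero r)
        have := natDegree_mul h2 hq1ne
        rw [← hq1, natDegree_pow, natDegree_X_sub_C] at this
        omega
      have hq1nn : ∀ x : ℝ, 0 ≤ q1.eval x := by
        apply nonneg_of_ne q1 r r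
        intro x hx _
        have hx2 : (0:ℝ) < (x - r) ^ 2 :=
          lt_of_le_of_ne (sq_nonneg _) (Ne.symm (pow_ne_zero 2 (sub_ne_zero.mpr hx)))
        have := hp x
        rw [hq1] at this
        simp only [eval_mul, eval_pow, eval_sub, eval_X, eval_C] at this
        exact nonneg_of_mul_nonneg_right this hx2
      obtain ⟨a, b, hab⟩ := ih q1.natDegree hq1deg q1 rfl hq1nn
      refine ⟨(X - C r) * a, (X - C r) * b, ?_⟩
      rw [hq1, hab]; ring
    · -- complex root, quadratic factor
      set d : Polynomial ℝ := C 1 * X ^ 2 + C (-(2 * z.re)) * X + C (z.re ^ 2 + z.im ^ 2) with hd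
      have c1 : (algebraMap ℝ ℂ) (-(2 * z.re)) = -(z + (starRingEnd ℂ) z) := by
        rw [Complex.add_conj]; push_cast; ring_nf; rfl
      have c2 : (algebraMap ℝ ℂ) (z.re ^ 2 + z.im ^ 2) = z * (starRingEnd ℂ) z := by
        rw [Complex.mul_conj, Complex.normSq_apply]; push_cast; ring_nf; rfl
      have hmapd : d.map (algebraMap ℝ ℂ) = (X - C z) * (X - C ((starRingEnd ℂ) z)) := by
        rw [hd]
        simp only [Polynomial.map_add, Polynomial.map_mul, Polynomial.map_pow,
          Polynomial.map_X, map_C]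
        rw [c1, c2, map_one]
        simp only [map_neg, map_add, map_mul, C_1]
        ring
      have key : (starRingEnd ℂ).comp (algebraMap ℝ ℂ) = algebraMap ℝ ℂ := by
        ext x; simp [Complex.conj_ofReal]
      have hzbar : (p.map (algebraMap ℝ ℂ)).IsRoot ((starRingEnd ℂ) z) := by
        have hz' : (p.map (algebraMap ℝ ℂ)).eval z = 0 := hz
        have h2 := Polynomial.hom_eval₂ p (algebraMap ℝ ℂ) (starRingEnd ℂ) z
        rw [key] at h2
        show (p.map (algebraMap ℝ ℂ)).eval ((starRingEnd ℂ) z) = 0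
        rw [eval_map, ← h2, ← eval_map, hz', map_zero]
      have hne : z ≠ (starRingEnd ℂ) z := by
        intro h; exact him ((Complex.conj_eq_iff_im.mp h.symm))
      have hcop : IsCoprime (X - C z) (X - C ((starRingEnd ℂ) z)) :=
        isCoprime_X_sub_C_of_isUnit_sub (isUnit_iff_ne_zero.mpr (sub_ne_zero.mpr hne))
      have hdvdC : (X - C z) * (X - C ((starRingEnd ℂ) z)) ∣ p.map (algebraMap ℝ ℂ) :=
        hcop.mul_dvd (dvd_iff_isRoot.mpr hz) (dvd_iff_isRoot.mpr hzbar)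
      rw [← hmapd] at hdvdC
      obtain ⟨q1, hq1⟩ : d ∣ p := (map_dvd_map' (algebraMap ℝ ℂ : ℝ →+* ℂ)).mp hdvdC
      have dpos : ∀ x : ℝ, 0 < d.eval x := by
        intro x
        have him2 : 0 < z.im ^ 2 :=
          lt_of_le_of_ne (sq_nonneg _) (Ne.symm (pow_ne_zero 2 him))
        have : d.eval x = (x - z.re) ^ 2 + z.im ^ 2 := by
          simp [hd]; ring
        rw [this]
        exact add_pos_of_nonneg_of_pos (sq_nonneg _) him2
      have hq1nn : ∀ x : ℝ, 0 ≤ q1.eval x := by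
        intro x
        have h0 := hp x
        rw [hq1, eval_mul] at h0
        nlinarith [dpos x]
      have hq1ne : q1 ≠ 0 := by rintro rfl; exact hp0 (by simp [hq1])
      have hdne : d ≠ 0 := fun h => by simpa [h] using dpos 0
      have hddeg : d.natDegree = 2 := by
        rw [hd]; exact natDegree_quadratic one_ne_zero
      have hq1deg : q1.natDegree < n := by
        have := natDegree_mul hdne hq1ne
        rw [← hq1, hddeg] at this
        omega
      obtain ⟨a, b, hab⟩ := ih q1.natDegree hq1deg q1 rfl hq1nn
      refine ⟨(X - C z.re) * a - C z.im * b, (X - C z.re) * b + C z.im * a, ?_⟩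
      rw [hq1, hab, hd]
      simp only [map_neg, map_add, map_mul, map_pow, C_1, map_ofNat]
      ring

lemma sos_of_nonneg' (p : Polynomial ℝ) (hp : ∀ x : ℝ, 0 ≤ p.eval x) :
    ∃ a b : Polynomial ℝ, p = a ^ 2 + b ^ 2 :=
  sos_of_nonneg p.natDegree p rfl hp

theorem stmt_1 (q : Polynomial ℝ) :
    memQ q ↔
    ∃ e f g h : Polynomial ℝ,
      (∀ x : ℝ, q.eval x = x * (1 - x) * (e.eval x ^ 2 + f.eval x ^ 2)) ∧
      (∀ x : ℝ, q.eval x = 1 - g.eval x ^ 2 - h.eval x ^ 2) := by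
  constructor
  · rintro ⟨h01, hneg, hge⟩
    -- q(0) = 0 and q(1) = 0
    have h00 : q.eval 0 = 0 :=
      le_antisymm (hneg 0 le_rfl) (h01 0 (by norm_num)).1
    have h11 : q.eval 1 = 0 :=
      le_antisymm (hge 1 le_rfl) (h01 1 (by norm_num)).1
    have hcop : IsCoprime (X - C (0:ℝ)) (X - C 1) :=
      isCoprime_X_sub_C_of_isUnit_sub (by norm_num)
    have hdvd : (X - C (0:ℝ)) * (X - C 1) ∣ q :=
      hcop.mul_dvd (dvd_iff_isRoot.mpr h00) (dvd_iff_isRoot.mpr h11)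
    obtain ⟨r, hr⟩ := hdvd
    have heval : ∀ x : ℝ, q.eval x = x * (1 - x) * (-r).eval x := by
      intro x; rw [hr]; simp; ring
    have hsnn : ∀ x : ℝ, 0 ≤ (-r).eval x := by
      apply nonneg_of_ne (-r) 0 1
      intro x hx0 hx1
      rcases lt_trichotomy x 0 with hx | hx | hx
      · have hq := hneg x hx.le
        rw [heval] at hq
        have hprod : x * (1 - x) < 0 := mul_neg_of_neg_of_pos hx (by linarith)
        by_contra hs
        push_neg at hs
        exact absurd hq (not_le.mpr (mul_pos_of_neg_of_neg hprod hs))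
      · exact absurd hx hx0
      · rcases lt_trichotomy x 1 with hx' | hx' | hx'
        · have hq := (h01 x ⟨hx.le, hx'.le⟩).1
          rw [heval] at hq
          have hprod : 0 < x * (1 - x) := mul_pos hx (by linarith)
          by_contra hs
          push_neg at hs
          exact absurd hq (not_le.mpr (mul_neg_of_pos_of_neg hprod hs))
        · exact absurd hx' hx1
        · have hq := hge x hx'.le
          rw [heval] at hq
          have hprod : x * (1 - x) < 0 := mul_neg_of_pos_of_neg (by linarith) (by linarith)
          by_contra hs
          push_neg at hs
          exact absurd hq (not_le.mpr (mul_pos_of_neg_of_neg hprod hs))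
    obtain ⟨e, f, hef⟩ := sos_of_nonneg' (-r) hsnn
    have h1q : ∀ x : ℝ, 0 ≤ (1 - q).eval x := by
      intro x
      rcases le_or_gt x 0 with hx | hx
      · have := hneg x hx; simp; linarith
      · rcases le_or_gt 1 x with hx' | hx'
        · have := hge x hx'; simp; linarith
        · have := (h01 x ⟨hx.le, hx'.le⟩).2; simp; linarith
    obtain ⟨g, h, hgh⟩ := sos_of_nonneg' (1 - q) h1q
    refine ⟨e, f, g, h, ?_, ?_⟩
    · intro x
      rw [heval x, hef]
      simp
    · intro x
      have : (1 - q).eval x = (g ^ 2 + h ^ 2).eval x := by rw [hgh]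
      simp at this
      linarith
  · rintro ⟨e, f, g, h, h1, h2⟩
    refine ⟨?_, ?_, ?_⟩
    · intro x hx
      obtain ⟨hx0, hx1⟩ := hx
      constructor
      · rw [h1 x]
        exact mul_nonneg (mul_nonneg hx0 (by linarith)) (by positivity)
      · rw [h2 x]; nlinarith [sq_nonneg (g.eval x), sq_nonneg (h.eval x)]
    · intro x hx
      rw [h1 x]
      have hprod : x * (1 - x) ≤ 0 := mul_nonpos_iff.mpr (Or.inr ⟨hx, by linarith⟩)
      exact mul_nonpos_iff.mpr (Or.inr ⟨hprod, by positivity⟩)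
    · intro x hx
      rw [h1 x]
      have hprod : x * (1 - x) ≤ 0 := mul_nonpos_iff.mpr (Or.inl ⟨by linarith, by linarith⟩)
      exact mul_nonpos_iff.mpr (Or.inr ⟨hprod, by positivity⟩)
end

section
/- The closure of 𝒫_G in C([0,1]) with respect to the supremum norm equals ℱ₁. That is, a continuous function f : [0,1] → ℝ is a uniform limit on [0,1] of (restrictions of) polynomials in 𝒫 if and only if f(0) = 0, f(1) = 1, and 0 ≤ f(x) ≤ 1 for all x ∈ [0,1]. -/
open Polynomial

/-- 𝒫_G: restrictions to [0,1] of polynomials in 𝒫, as continuous maps. -/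
def PG : Set C(Set.Icc (0:ℝ) 1, ℝ) :=
  {g | ∃ p : Polynomial ℝ, memP p ∧ g = p.toContinuousMapOn (Set.Icc (0:ℝ) 1)}

/-- ℱ₁ : continuous f : [0,1] → ℝ with f(0)=0, f(1)=1, 0 ≤ f ≤ 1. -/
def F1 : Set C(Set.Icc (0:ℝ) 1, ℝ) :=
  {f | f ⟨0, by norm_num⟩ = 0 ∧ f ⟨1, by norm_num⟩ = 1 ∧
       ∀ x, f x ∈ Set.Icc (0:ℝ) 1}

open Set
lemma memP_comp {p q : Polynomial ℝ} (hp : memP p) (hq : memP q) : memP (p.comp q) := by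
  obtain ⟨hp1, hp2, hp3⟩ := hp
  obtain ⟨hq1, hq2, hq3⟩ := hq
  refine ⟨?_, ?_, ?_⟩
  · intro x hx
    rw [eval_comp]
    exact hp1 _ (hq1 x hx)
  · intro x hx
    rw [eval_comp]
    exact hp2 _ (hq2 x hx)
  · intro x hx
    rw [eval_comp]
    exact hp3 _ (hq3 x hx)

lemma memP_reflect {p : Polynomial ℝ} (hp : memP p) : memP (1 - p.comp (1 - X)) := by
  obtain ⟨hp1, hp2, hp3⟩ := hp
  have hev : ∀ x : ℝ, (1 - p.comp (1 - X)).eval x = 1 - p.eval (1 - x) := by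
    intro x; simp [eval_comp]
  refine ⟨?_, ?_, ?_⟩
  · intro x hx
    rw [hev]
    have h := hp1 (1 - x) ⟨by linarith [hx.2], by linarith [hx.1]⟩
    exact ⟨by linarith [h.2], by linarith [h.1]⟩
  · intro x hx
    rw [hev]
    have := hp3 (1 - x) (by linarith)
    linarith
  · intro x hx
    rw [hev]
    have := hp2 (1 - x) (by linarith)
    linarith


lemma exists_decomp (f : ℝ → ℝ) (hf : Continuous f) (h0 : f 0 = 0) (h1 : f 1 = 1)
    (hrange : ∀ t : ℝ, f t ∈ Set.Icc (0:ℝ) 1) (η : ℝ) (hη : 0 < η) (hη1 : η < 1) :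
    ∃ g1 g2 : ℝ → ℝ,
      ContinuousOn g1 (Set.Icc 0 1) ∧ g1 0 = 0 ∧
      (∀ x ∈ Set.Icc (0:ℝ) 1, x ≤ g1 x ∧ g1 x ≤ 1) ∧
      ContinuousOn g2 (Set.Icc 0 1) ∧ g2 1 = 1 ∧
      (∀ x ∈ Set.Icc (0:ℝ) 1, 0 ≤ g2 x ∧ g2 x ≤ x) ∧
      (∀ x ∈ Set.Icc (0:ℝ) 1, |g1 (g2 x) - f x| ≤ η) := by
  classical
  set h : ℝ → ℝ := fun t => min (f t) t with hh
  have hcont_h : Continuous h := hf.min continuous_id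
  set M : ℝ → ℝ := fun x => sInf (h '' Set.Icc x 1) with hM
  have hne : ∀ x : ℝ, x ≤ 1 → (h '' Set.Icc x 1).Nonempty := by
    intro x hx; exact ⟨h x, ⟨x, ⟨le_rfl, hx⟩, rfl⟩⟩
  have hbb : ∀ x : ℝ, 0 ≤ x → BddBelow (h '' Set.Icc x 1) := by
    intro x hx
    refine ⟨0, ?_⟩
    rintro _ ⟨t, ht, rfl⟩
    exact le_min (hrange t).1 (le_trans hx ht.1)
  have hM_le : ∀ x ∈ Set.Icc (0:ℝ) 1, ∀ t ∈ Set.Icc x 1, M x ≤ h t := by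
    intro x hx t ht
    exact csInf_le (hbb x hx.1) ⟨t, ht, rfl⟩
  have hM0 : ∀ x ∈ Set.Icc (0:ℝ) 1, 0 ≤ M x := by
    intro x hx
    refine le_csInf (hne x hx.2) ?_
    rintro _ ⟨t, ht, rfl⟩
    exact le_min (hrange t).1 (le_trans hx.1 ht.1)
  have hMmono : ∀ x ∈ Set.Icc (0:ℝ) 1, ∀ y ∈ Set.Icc (0:ℝ) 1, x ≤ y → M x ≤ M y := by
    intro x hx y hy hxy
    exact csInf_le_csInf (hbb x hx.1) (hne y hy.2)
      (Set.image_mono (f := h) (Set.Icc_subset_Icc_left hxy))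
  have hMzero : M 0 = 0 := by
    refine le_antisymm ?_ (hM0 0 ⟨le_rfl, zero_le_one⟩)
    have := hM_le 0 ⟨le_rfl, zero_le_one⟩ 0 ⟨le_rfl, zero_le_one⟩
    simpa [hh, h0] using this
  have hMone : M 1 = 1 := by
    have hle : M 1 ≤ 1 := by
      have := hM_le 1 ⟨zero_le_one, le_rfl⟩ 1 ⟨le_rfl, le_rfl⟩
      simpa [hh, h1] using this
    have hge : (1:ℝ) ≤ M 1 := by
      refine le_csInf (hne 1 le_rfl) ?_
      rintro _ ⟨t, ht, rfl⟩
      have : t = 1 := le_antisymm ht.2 ht.1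
      simp [hh, this, h1]
    linarith
  have hMleh : ∀ x ∈ Set.Icc (0:ℝ) 1, M x ≤ h x := by
    intro x hx
    exact hM_le x hx x ⟨le_rfl, hx.2⟩
  -- continuity of M on Icc 0 1
  have hMcont : ContinuousOn M (Set.Icc 0 1) := by
    rw [Metric.continuousOn_iff]
    intro b hb ε hε
    have huc := (isCompact_Icc : IsCompact (Set.Icc (0:ℝ) 1)).uniformContinuousOn_of_continuous
      hcont_h.continuousOn
    rw [Metric.uniformContinuousOn_iff] at huc
    obtain ⟨δ, hδ, hδ'⟩ := huc (ε/2) (by linarith)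
    refine ⟨δ, hδ, ?_⟩
    intro a ha hab
    have key : ∀ u ∈ Set.Icc (0:ℝ) 1, ∀ v ∈ Set.Icc (0:ℝ) 1, u ≤ v → v - u < δ →
        M v - ε/2 ≤ M u := by
      intro u hu v hv huv hd
      refine le_csInf (hne u hu.2) ?_
      rintro _ ⟨t, ht, rfl⟩
      rcases le_or_gt v t with hvt | hvt
      · have := hM_le v hv t ⟨hvt, ht.2⟩
        linarith
      · have htI : t ∈ Set.Icc (0:ℝ) 1 := ⟨le_trans hu.1 ht.1, ht.2⟩
        have hdist : dist t v < δ := by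
          rw [Real.dist_eq, abs_of_nonpos (by linarith)]
          linarith [ht.1]
        have := hδ' t htI v hv hdist
        rw [Real.dist_eq] at this
        have habs := abs_lt.mp this
        have hMv := hM_le v hv v ⟨le_rfl, hv.2⟩
        linarith [habs.1, habs.2]
    rw [Real.dist_eq] at hab ⊢
    rcases le_total a b with hab' | hab'
    · have k1 := key a ha b hb hab' (by rw [abs_of_nonpos (by linarith)] at hab; linarith)
      have k2 := hMmono a ha b hb hab'
      rw [abs_of_nonpos (by linarith)]
      linarith
    · have k1 := key b hb a ha hab' (by rw [abs_of_nonneg (by linarith)] at hab; linarith)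
      have k2 := hMmono b hb a ha hab'
      rw [abs_of_nonneg (by linarith)]
      linarith
  -- g2
  set g2 : ℝ → ℝ := fun x => η * x + (1 - η) * M x with hg2def
  have hg2cont : ContinuousOn g2 (Set.Icc 0 1) :=
    (continuousOn_const.mul continuousOn_id).add (continuousOn_const.mul hMcont)
  have hg2zero : g2 0 = 0 := by simp [hg2def, hMzero]
  have hg2one : g2 1 = 1 := by simp only [hg2def]; rw [hMone]; ring
  have hg2bounds : ∀ x ∈ Set.Icc (0:ℝ) 1, 0 ≤ g2 x ∧ g2 x ≤ x := by
    intro x hx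
    have h1' := hM0 x hx
    have h2' := hMleh x hx
    have h3' : h x ≤ x := min_le_right _ _
    constructor
    · have : 0 ≤ η * x := mul_nonneg hη.le hx.1
      have : 0 ≤ (1-η) * M x := mul_nonneg (by linarith) h1'
      simp only [hg2def]
      nlinarith [mul_nonneg hη.le hx.1]
    · simp only [hg2def]
      nlinarith
  have hg2f : ∀ x ∈ Set.Icc (0:ℝ) 1, g2 x ≤ f x + η := by
    intro x hx
    have h2' := hMleh x hx
    have h3' : h x ≤ f x := min_le_left _ _
    have hx1 : x ≤ 1 := hx.2
    have hf0 : 0 ≤ f x := (hrange x).1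
    simp only [hg2def]
    nlinarith
  have hg2smon : StrictMonoOn g2 (Set.Icc 0 1) := by
    intro x hx y hy hxy
    have := hMmono x hx y hy hxy.le
    simp only [hg2def]
    nlinarith
  -- F''
  set F2 : ℝ → ℝ := fun t => max (f t) (g2 t) with hF2def
  have hF2cont : ContinuousOn F2 (Set.Icc 0 1) := hf.continuousOn.sup hg2cont
  have hF2zero : F2 0 = 0 := by
    simp [hF2def, h0, hg2zero]
  have hF2ub : ∀ x ∈ Set.Icc (0:ℝ) 1, F2 x ≤ 1 := by
    intro x hx
    exact max_le (hrange x).2 (le_trans (hg2bounds x hx).2 hx.2)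
  have hF2lb : ∀ x ∈ Set.Icc (0:ℝ) 1, g2 x ≤ F2 x := fun x _ => le_max_right _ _
  have hF2near : ∀ x ∈ Set.Icc (0:ℝ) 1, |F2 x - f x| ≤ η := by
    intro x hx
    rw [abs_le]
    constructor
    · have : f x ≤ F2 x := le_max_left _ _
      linarith
    · have : F2 x ≤ f x + η := max_le (by linarith) (hg2f x hx)
      linarith
  -- order iso
  set I := Set.Icc (0:ℝ) 1 with hI
  have hmem : ∀ x : I, g2 ↑x ∈ I := by
    intro x
    exact ⟨(hg2bounds x x.2).1, le_trans (hg2bounds x x.2).2 x.2.2⟩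
  set G2 : I → I := fun x => ⟨g2 ↑x, hmem x⟩ with hG2def
  have hG2smon : StrictMono G2 := by
    intro x y hxy
    have : g2 ↑x < g2 ↑y := hg2smon x.2 y.2 hxy
    exact Subtype.mk_lt_mk.mpr this
  have hG2surj : Function.Surjective G2 := by
    intro y
    have hsub : Set.Icc (g2 0) (g2 1) ⊆ g2 '' Set.Icc 0 1 :=
      intermediate_value_Icc zero_le_one hg2cont
    have hy' : (y:ℝ) ∈ Set.Icc (g2 0) (g2 1) := by
      rw [hg2zero, hg2one]; exact y.2
    obtain ⟨x, hx, hgx⟩ := hsub hy'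
    exact ⟨⟨x, hx⟩, Subtype.ext hgx⟩
  set e : I ≃o I := StrictMono.orderIsoOfSurjective G2 hG2smon hG2surj with hedef
  have he_apply : ∀ x : I, e x = G2 x := fun x => rfl
  haveI : OrdConnected I := Set.ordConnected_Icc
  have hψcont : Continuous (e.symm : I → I) := OrderIso.continuous e.symm
  -- g1
  set g1 : ℝ → ℝ := fun y => F2 ↑(e.symm (Set.projIcc 0 1 zero_le_one y)) with hg1def
  have hg1cont : ContinuousOn g1 (Set.Icc 0 1) := by
    have hinner : Continuous (fun y : ℝ => (↑(e.symm (Set.projIcc 0 1 zero_le_one y)) : ℝ)) :=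
      continuous_subtype_val.comp (hψcont.comp continuous_projIcc)
    have : Continuous g1 := by
      refine hF2cont.comp_continuous hinner ?_
      intro y
      exact (e.symm (Set.projIcc 0 1 zero_le_one y)).2
    exact this.continuousOn
  have hg1eval : ∀ y : ℝ, ∀ hy : y ∈ I, g1 y = F2 ↑(e.symm ⟨y, hy⟩) := by
    intro y hy
    simp only [hg1def]
    rw [Set.projIcc_of_mem]
  have hg1zero : g1 0 = 0 := by
    have h00 : (0:ℝ) ∈ I := ⟨le_rfl, zero_le_one⟩
    rw [hg1eval 0 h00]
    have : e ⟨0, h00⟩ = ⟨0, h00⟩ := by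
      rw [he_apply]
      exact Subtype.ext hg2zero
    have hsymm : e.symm ⟨0, h00⟩ = ⟨0, h00⟩ :=
      (OrderIso.symm_apply_eq e).mpr this.symm
    rw [hsymm]
    exact hF2zero
  have hg1bounds : ∀ y ∈ Set.Icc (0:ℝ) 1, y ≤ g1 y ∧ g1 y ≤ 1 := by
    intro y hy
    rw [hg1eval y hy]
    set z := e.symm ⟨y, hy⟩ with hzdef
    have hz : g2 ↑z = y := by
      have : e z = ⟨y, hy⟩ := OrderIso.apply_symm_apply e ⟨y, hy⟩
      have := congrArg Subtype.val this
      rw [he_apply] at this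
      exact this
    constructor
    · calc y = g2 ↑z := hz.symm
        _ ≤ F2 ↑z := hF2lb ↑z z.2
    · exact hF2ub ↑z z.2
  have hcompid : ∀ x ∈ Set.Icc (0:ℝ) 1, g1 (g2 x) = F2 x := by
    intro x hx
    have hg2mem : g2 x ∈ I := (hmem ⟨x, hx⟩)
    rw [hg1eval (g2 x) hg2mem]
    have : e ⟨x, hx⟩ = ⟨g2 x, hg2mem⟩ := by
      rw [he_apply]
    have hsymm : e.symm ⟨g2 x, hg2mem⟩ = ⟨x, hx⟩ :=
      (OrderIso.symm_apply_eq e).mpr this.symm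
    rw [hsymm]
  refine ⟨g1, g2, hg1cont, hg1zero, hg1bounds, hg2cont, hg2one, hg2bounds, ?_⟩
  intro x hx
  rw [hcompid x hx]
  exact hF2near x hx
lemma fam1_eval (s : Polynomial ℝ) (x : ℝ) :
    (1 - (1 - X) * (1 - X * s^2)^2).eval x = 1 - (1 - x) * (1 - x * (s.eval x)^2)^2 := by
  simp only [eval_sub, eval_one, eval_mul, eval_pow, eval_X]

lemma memP_fam1 (s : Polynomial ℝ) (hs : ∀ x ∈ Set.Icc (0:ℝ) 1, x * (s.eval x)^2 ≤ 2) :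
    memP (1 - (1 - X) * (1 - X * s^2)^2) := by
  refine ⟨?_, ?_, ?_⟩
  · intro x hx
    rw [fam1_eval]
    have h1 : 0 ≤ x * (s.eval x)^2 := mul_nonneg hx.1 (sq_nonneg _)
    have h2 : x * (s.eval x)^2 ≤ 2 := hs x hx
    constructor
    · have hv : (1 - x * (s.eval x)^2)^2 ≤ 1 := by nlinarith
      have h3 : (1 - x) * (1 - x * (s.eval x)^2)^2 ≤ 1 := by nlinarith [hx.1, hx.2]
      linarith
    · have : 0 ≤ (1 - x) * (1 - x * (s.eval x)^2)^2 :=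
        mul_nonneg (by linarith [hx.2]) (sq_nonneg _)
      linarith
  · intro x hx
    rw [fam1_eval]
    have h1 : x * (s.eval x)^2 ≤ 0 := mul_nonpos_of_nonpos_of_nonneg hx (sq_nonneg _)
    have h2 : (1:ℝ) ≤ 1 - x * (s.eval x)^2 := by linarith
    have h3 : (1:ℝ) ≤ (1 - x * (s.eval x)^2)^2 := by nlinarith
    have h4 : (1:ℝ) ≤ 1 - x := by linarith
    nlinarith
  · intro x hx
    rw [fam1_eval]
    have : (1 - x) * (1 - x * (s.eval x)^2)^2 ≤ 0 :=
      mul_nonpos_of_nonpos_of_nonneg (by linarith) (sq_nonneg _)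
    linarith

set_option maxHeartbeats 2000000 in
lemma lemA (G : ℝ → ℝ) (hc : ContinuousOn G (Set.Icc 0 1)) (h0 : G 0 = 0)
    (hbd : ∀ x ∈ Set.Icc (0:ℝ) 1, x ≤ G x ∧ G x ≤ 1) (ε : ℝ) (hε : 0 < ε) :
    ∃ p : Polynomial ℝ, memP p ∧ ∀ x ∈ Set.Icc (0:ℝ) 1, |p.eval x - G x| ≤ ε := by
  classical
  set em := min ε 1 with hemdef
  have hem0 : 0 < em := lt_min hε one_pos
  have hem1 : em ≤ 1 := min_le_right _ _
  have hemε : em ≤ ε := min_le_left _ _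
  -- continuity at 0
  have hcw : ContinuousWithinAt G (Set.Icc 0 1) 0 := hc 0 ⟨le_rfl, zero_le_one⟩
  rw [Metric.continuousWithinAt_iff] at hcw
  obtain ⟨δ₁, hδ₁, hδ₁'⟩ := hcw (em/10) (by linarith)
  set δ₀ := min (δ₁/2) (1/4 : ℝ) with hδ₀def
  have hδ₀pos : 0 < δ₀ := lt_min (by linarith) (by norm_num)
  have hδ₀le : δ₀ ≤ 1/4 := min_le_right _ _
  have hδ₀G : ∀ x : ℝ, 0 ≤ x → x ≤ δ₀ → G x ≤ em/10 := by
    intro x hx1 hx2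
    have hxI : x ∈ Set.Icc (0:ℝ) 1 := ⟨hx1, by linarith [hδ₀le]⟩
    have hd : dist x 0 < δ₁ := by
      rw [Real.dist_eq, sub_zero, abs_of_nonneg hx1]
      have : δ₀ ≤ δ₁/2 := min_le_left _ _
      linarith
    have := hδ₁' hxI hd
    rw [h0, Real.dist_eq, sub_zero] at this
    calc G x ≤ |G x| := le_abs_self _
      _ ≤ em/10 := this.le
  set η := min δ₀ (em/10) with hηdef
  have hη0 : 0 < η := lt_min hδ₀pos (by linarith)
  have hη14 : η ≤ 1/4 := le_trans (min_le_left _ _) hδ₀le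
  have hηδ₀ : η ≤ δ₀ := min_le_left _ _
  have hηem : η ≤ em/10 := min_le_right _ _
  -- T
  set T : ℝ → ℝ := fun x => 1 - Real.sqrt ((1 - G x)/(1 - x)) with hTdef
  have hr01 : ∀ x : ℝ, x ∈ Set.Icc (0:ℝ) 1 → x < 1 → 0 ≤ (1 - G x)/(1 - x) ∧ (1 - G x)/(1 - x) ≤ 1 := by
    intro x hx hx1
    have hb := hbd x hx
    have hden : 0 < 1 - x := by linarith
    constructor
    · exact div_nonneg (by linarith [hb.2]) hden.le
    · rw [div_le_one hden]; linarith [hb.1]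
  have hT01 : ∀ x : ℝ, x ∈ Set.Icc (0:ℝ) 1 → x < 1 → 0 ≤ T x ∧ T x ≤ 1 := by
    intro x hx hx1
    obtain ⟨hr0, hr1⟩ := hr01 x hx hx1
    constructor
    · simp only [hTdef]
      have := Real.sqrt_le_one.mpr hr1
      linarith
    · simp only [hTdef]
      have := Real.sqrt_nonneg ((1 - G x)/(1 - x))
      linarith
  have hTid : ∀ x : ℝ, x ∈ Set.Icc (0:ℝ) 1 → x < 1 → (1 - x) * (1 - T x)^2 = 1 - G x := by
    intro x hx hx1
    obtain ⟨hr0, _⟩ := hr01 x hx hx1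
    have hden : (1:ℝ) - x ≠ 0 := by linarith
    simp only [hTdef, sub_sub_cancel]
    rw [Real.sq_sqrt hr0]
    field_simp
  have hTub : ∀ x : ℝ, x ∈ Set.Icc (0:ℝ) 1 → x < 1 → T x ≤ (G x - x)/(1 - x) := by
    intro x hx hx1
    obtain ⟨hr0, hr1⟩ := hr01 x hx hx1
    have hrle : (1 - G x)/(1 - x) ≤ Real.sqrt ((1 - G x)/(1 - x)) := by
      rw [Real.le_sqrt hr0 hr0]
      nlinarith
    have hden : 0 < 1 - x := by linarith
    simp only [hTdef]
    have : (G x - x)/(1-x) = 1 - (1 - G x)/(1-x) := by field_simp; ring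
    rw [this]
    linarith
  -- clamp
  set c : ℝ → ℝ := fun x => max η (min x (1 - η)) with hcdef
  have hcmem : ∀ x : ℝ, c x ∈ Set.Icc η (1 - η) := by
    intro x
    constructor
    · exact le_max_left _ _
    · exact max_le (by linarith) (min_le_right _ _)
  have hcIcc : ∀ x : ℝ, c x ∈ Set.Icc (0:ℝ) 1 := by
    intro x
    have := hcmem x
    exact ⟨le_trans hη0.le this.1, by linarith [this.2]⟩
  have hclt1 : ∀ x : ℝ, c x < 1 := fun x => by linarith [(hcmem x).2]
  have hcval1 : ∀ x : ℝ, x ≤ η → c x = η := by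
    intro x hxη
    simp only [hcdef]
    rw [min_eq_left (by linarith), max_eq_left hxη]
  have hcval2 : ∀ x : ℝ, η ≤ x → x ≤ 1 - η → c x = x := by
    intro x h1 h2
    simp only [hcdef]
    rw [min_eq_left h2, max_eq_right h1]
  have hcval3 : ∀ x : ℝ, 1 - η ≤ x → c x = 1 - η := by
    intro x h1
    simp only [hcdef]
    rw [min_eq_right h1, max_eq_right (by linarith)]
  -- s₀
  set s₀ : ℝ → ℝ := fun x => Real.sqrt (T (c x) / c x) with hs₀def
  have hTcnonneg : ∀ x : ℝ, 0 ≤ T (c x) / c x := by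
    intro x
    exact div_nonneg (hT01 (c x) (hcIcc x) (hclt1 x)).1 (le_trans hη0.le (hcmem x).1)
  have hs₀sq : ∀ x : ℝ, (s₀ x)^2 = T (c x) / c x := fun x => Real.sq_sqrt (hTcnonneg x)
  set B := Real.sqrt (1/η) with hBdef
  have hB1 : 1 ≤ B := by
    rw [hBdef, Real.le_sqrt zero_le_one (by positivity), one_pow, le_div_iff₀ hη0]
    linarith
  have hBsq : B^2 = 1/η := Real.sq_sqrt (by positivity)
  have hs₀bd : ∀ x : ℝ, 0 ≤ s₀ x ∧ s₀ x ≤ B := by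
    intro x
    refine ⟨Real.sqrt_nonneg _, ?_⟩
    apply Real.sqrt_le_sqrt
    have h1 : T (c x) ≤ 1 := (hT01 (c x) (hcIcc x) (hclt1 x)).2
    have h2 : η ≤ c x := (hcmem x).1
    have h0' : 0 ≤ T (c x) := (hT01 (c x) (hcIcc x) (hclt1 x)).1
    rw [div_le_div_iff₀ (by linarith) hη0]
    nlinarith
  -- continuity of s₀
  have hsub : Set.Icc η (1-η) ⊆ Set.Icc (0:ℝ) 1 := by
    intro y hy
    exact ⟨le_trans hη0.le hy.1, by linarith [hy.2]⟩
  have hTcont : ContinuousOn T (Set.Icc η (1-η)) := by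
    apply ContinuousOn.sub continuousOn_const
    apply Real.continuous_sqrt.comp_continuousOn
    apply ContinuousOn.div
    · exact continuousOn_const.sub (hc.mono hsub)
    · exact continuousOn_const.sub continuousOn_id
    · intro y hy
      have h2 : y ≤ 1 - η := hy.2
      have : (0:ℝ) < 1 - y := by linarith
      exact ne_of_gt this
  have houter : ContinuousOn (fun y => Real.sqrt (T y / y)) (Set.Icc η (1-η)) := by
    apply Real.continuous_sqrt.comp_continuousOn
    exact hTcont.div continuousOn_id (fun y hy => ne_of_gt (lt_of_lt_of_le hη0 hy.1))
  have hcc : Continuous c := continuous_const.max (continuous_id.min continuous_const)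
  have hs₀cont : Continuous s₀ := houter.comp_continuous hcc hcmem
  clear_value B
  -- Weierstrass
  have hBpos : (0:ℝ) < 100*(B+1) := by nlinarith
  set μ := em / (100 * (B + 1)) with hμdef
  have hμ0 : 0 < μ := div_pos hem0 hBpos
  have hμ1 : μ ≤ 1 := by
    rw [hμdef, div_le_one hBpos]
    nlinarith
  have hμB : μ * (2*B+1) ≤ em/50 := by
    rw [hμdef, div_mul_eq_mul_div, div_le_div_iff₀ hBpos (by norm_num)]
    nlinarith
  clear_value μ
  obtain ⟨s, hW⟩ := exists_polynomial_near_of_continuousOn 0 1 s₀ hs₀cont.continuousOn μ hμ0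
  clear_value s₀
  clear_value c
  clear_value T
  -- pointwise bounds
  have est1 : ∀ x ∈ Set.Icc (0:ℝ) 1, |x * (s.eval x)^2 - x * (s₀ x)^2| ≤ em/50 := by
    intro x hx
    have hd : |s.eval x - s₀ x| ≤ μ := (hW x hx).le
    have hsum : |s.eval x + s₀ x| ≤ 2*B + 1 := by
      have h1 : s.eval x + s₀ x = (s.eval x - s₀ x) + 2 * s₀ x := by ring
      rw [h1]
      refine le_trans (abs_add_le _ _) ?_
      have h2 : |2 * s₀ x| = 2 * s₀ x := abs_of_nonneg (by linarith [(hs₀bd x).1])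
      rw [h2]
      have := (hs₀bd x).2
      linarith
    have hkey : x * (s.eval x)^2 - x * (s₀ x)^2
        = x * ((s.eval x - s₀ x) * (s.eval x + s₀ x)) := by ring
    rw [hkey, abs_mul, abs_mul]
    have hxabs : |x| ≤ 1 := by rw [abs_of_nonneg hx.1]; exact hx.2
    have hstep : |s.eval x - s₀ x| * |s.eval x + s₀ x| ≤ μ * (2*B+1) := by
      apply mul_le_mul hd hsum (abs_nonneg _) hμ0.le
    have hfin := hμB
    calc |x| * (|s.eval x - s₀ x| * |s.eval x + s₀ x|) ≤ 1 * (μ * (2*B+1)) := by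
          apply mul_le_mul hxabs hstep (by positivity) zero_le_one
      _ ≤ em/50 := by rw [one_mul]; exact hfin
  have est2 : ∀ x ∈ Set.Icc (0:ℝ) 1, x * (s₀ x)^2 ≤ 4/3 := by
    intro x hx
    rw [hs₀sq x]
    rcases le_or_gt x (1-η) with hcase | hcase
    · rcases le_total x η with hxη | hxη
      · rw [hcval1 x hxη]
        have hT : T η ≤ 1 := (hT01 η ⟨hη0.le, by linarith⟩ (by linarith)).2
        have hT0 : 0 ≤ T η := (hT01 η ⟨hη0.le, by linarith⟩ (by linarith)).1
        calc x * (T η / η) ≤ η * (T η / η) := by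
              apply mul_le_mul_of_nonneg_right hxη (by positivity)
          _ = T η := by field_simp
          _ ≤ 4/3 := by linarith
      · rw [hcval2 x hxη hcase]
        have hT : T x ≤ 1 := (hT01 x hx (by linarith)).2
        have hx0 : (0:ℝ) < x := lt_of_lt_of_le hη0 hxη
        rw [mul_div_cancel₀ _ (ne_of_gt hx0)]
        linarith
    · rw [hcval3 x hcase.le]
      have hT : T (1-η) ≤ 1 := (hT01 (1-η) ⟨by linarith, by linarith⟩ (by linarith)).2
      have hT0 : 0 ≤ T (1-η) := (hT01 (1-η) ⟨by linarith, by linarith⟩ (by linarith)).1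
      have hden : (3:ℝ)/4 ≤ 1 - η := by linarith
      have : T (1-η) / (1-η) ≤ 1 / (3/4) := by
        apply div_le_div₀ zero_le_one hT (by norm_num) hden
      calc x * (T (1-η)/(1-η)) ≤ 1 * (T (1-η)/(1-η)) := by
            apply mul_le_mul_of_nonneg_right hx.2 (by positivity)
        _ ≤ 1 * (1/(3/4)) := by linarith [this]
        _ = 4/3 := by norm_num
  have hwle : ∀ x ∈ Set.Icc (0:ℝ) 1, x * (s.eval x)^2 ≤ 2 := by
    intro x hx
    have h1 := est1 x hx
    have h2 := est2 x hx
    have := abs_le.mp h1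
    linarith [hem1, this.2]
  refine ⟨1 - (1 - X) * (1 - X * s^2)^2, memP_fam1 s hwle, ?_⟩
  intro x hx
  rw [fam1_eval]
  set w := x * (s.eval x)^2 with hwdef
  have hw0 : 0 ≤ w := mul_nonneg hx.1 (sq_nonneg _)
  have hw2 : w ≤ 2 := hwle x hx
  have hGb := hbd x hx
  rcases le_or_gt x η with hxη | hxη
  · -- region A
    have hcx : c x = η := hcval1 x hxη
    have hTle : T η ≤ 2*em/15 := by
      have hηI : η ∈ Set.Icc (0:ℝ) 1 := ⟨hη0.le, by linarith⟩
      have h1 := hTub η hηI (by linarith)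
      have h2 : G η ≤ em/10 := hδ₀G η hη0.le hηδ₀
      have h3 : (G η - η)/(1-η) ≤ (em/10)/(3/4) := by
        apply div_le_div₀ (by linarith) (by linarith) (by norm_num) (by linarith)
      have h4 : (em/10)/((3:ℝ)/4) = 2*em/15 := by ring
      linarith
    have hxs₀ : x * (s₀ x)^2 ≤ T η := by
      rw [hs₀sq x, hcx]
      have hT0 : 0 ≤ T η := (hT01 η ⟨hη0.le, by linarith⟩ (by linarith)).1
      calc x * (T η / η) ≤ η * (T η / η) := by
            apply mul_le_mul_of_nonneg_right hxη (by positivity)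
        _ = T η := by field_simp
    have hwA : w ≤ 2*em/15 + em/50 := by
      have := abs_le.mp (est1 x hx)
      linarith [this.2]
    have hGx : G x ≤ em/10 := hδ₀G x hx.1 (by linarith)
    have hid : 1 - (1-x) * (1-w)^2 - x = (1-x) * (w * (2 - w)) := by ring
    have habs : |1 - (1-x) * (1-w)^2 - x| ≤ 2 * w := by
      rw [hid, abs_of_nonneg (mul_nonneg (by linarith [hx.2]) (mul_nonneg hw0 (by linarith)))]
      nlinarith [sq_nonneg w, mul_nonneg (mul_nonneg hx.1 hw0) (by linarith : (0:ℝ) ≤ 2 - w)]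
    have htri : |1 - (1-x) * (1-w)^2 - G x| ≤ |1 - (1-x)*(1-w)^2 - x| + |x - G x| :=
      abs_sub_le _ _ _
    have hxG : |x - G x| ≤ em/10 := by
      rw [abs_of_nonpos (by linarith [hGb.1])]
      linarith [hx.1, hGx]
    calc |1 - (1-x) * (1-w)^2 - G x| ≤ 2*w + em/10 := by linarith
      _ ≤ 2*(2*em/15 + em/50) + em/10 := by linarith
      _ ≤ em := by linarith
      _ ≤ ε := hemε
  · rcases le_or_gt x (1-η) with hxη2 | hxη2
    · -- region B
      have hx1 : x < 1 := by linarith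
      have hcx : c x = x := hcval2 x hxη.le hxη2
      have hxs₀ : x * (s₀ x)^2 = T x := by
        rw [hs₀sq x, hcx, mul_div_cancel₀ _ (ne_of_gt (lt_trans hη0 hxη))]
      have hwT : |w - T x| ≤ em/50 := by
        have := est1 x hx
        rw [hxs₀] at this
        exact this
      have hT01x := hT01 x hx hx1
      have hTidx := hTid x hx hx1
      have hkey : 1 - (1-x) * (1-w)^2 - G x
          = (1-x) * ((w - T x) * (2 - T x - w)) := by
        have : (1:ℝ) - G x = (1-x) * (1 - T x)^2 := hTidx.symm
        rw [sub_sub, add_comm, ← sub_sub, this]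
        ring
      rw [hkey, abs_mul, abs_mul]
      have h1 : |1 - x| ≤ 1 := by rw [abs_of_nonneg (by linarith)]; linarith [hx.1]
      have h2 : |2 - T x - w| ≤ 2 := by
        rw [abs_le]
        constructor <;> [linarith [hT01x.2, hw2]; linarith [hT01x.1, hw0]]
      calc |1-x| * (|w - T x| * |2 - T x - w|) ≤ 1 * (em/50 * 2) := by
            apply mul_le_mul h1 ?_ (by positivity) zero_le_one
            apply mul_le_mul hwT h2 (abs_nonneg _) (by linarith)
        _ ≤ em := by linarith
        _ ≤ ε := hemε
    · -- region C
      have h1G : 1 - G x ≤ η := by linarith [hGb.1]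
      have hG1 : G x ≤ 1 := hGb.2
      have hp1 : (1-x) * (1-w)^2 ≤ η := by
        have hsq : (1-w)^2 ≤ 1 := by nlinarith
        have h1x : 0 ≤ 1 - x := by linarith [hx.2]
        nlinarith
      have hp0 : 0 ≤ (1-x) * (1-w)^2 := mul_nonneg (by linarith [hx.2]) (sq_nonneg _)
      rw [abs_le]
      constructor
      · have : η ≤ em := by linarith [hηem, hem0]
        linarith
      · have : η ≤ em := by linarith [hηem, hem0]
        linarith [hemε, h1G, hp0]

lemma lemB (G : ℝ → ℝ) (hc : ContinuousOn G (Set.Icc 0 1)) (h1 : G 1 = 1)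
    (hbd : ∀ x ∈ Set.Icc (0:ℝ) 1, 0 ≤ G x ∧ G x ≤ x) (ε : ℝ) (hε : 0 < ε) :
    ∃ p : Polynomial ℝ, memP p ∧ ∀ x ∈ Set.Icc (0:ℝ) 1, |p.eval x - G x| ≤ ε := by
  set G' : ℝ → ℝ := fun x => 1 - G (1 - x) with hG'def
  have hc' : ContinuousOn G' (Set.Icc 0 1) := by
    apply continuousOn_const.sub
    apply hc.comp (continuousOn_const.sub continuousOn_id)
    intro x hx
    have h2 : (0:ℝ) ≤ 1 - x := by linarith [hx.2]
    have h3 : (1:ℝ) - x ≤ 1 := by linarith [hx.1]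
    exact ⟨h2, h3⟩
  have h0' : G' 0 = 0 := by simp [hG'def, h1]
  have hbd' : ∀ x ∈ Set.Icc (0:ℝ) 1, x ≤ G' x ∧ G' x ≤ 1 := by
    intro x hx
    have h := hbd (1-x) ⟨by linarith [hx.2], by linarith [hx.1]⟩
    constructor
    · simp only [hG'def]; linarith [h.2]
    · simp only [hG'def]; linarith [h.1]
  obtain ⟨p', hp', herr⟩ := lemA G' hc' h0' hbd' ε hε
  refine ⟨1 - p'.comp (1 - X), memP_reflect hp', ?_⟩
  intro x hx
  have hev : (1 - p'.comp (1 - X)).eval x = 1 - p'.eval (1 - x) := by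
    simp [eval_comp]
  rw [hev]
  have h1x : (1 - x) ∈ Set.Icc (0:ℝ) 1 := ⟨by linarith [hx.2], by linarith [hx.1]⟩
  have herr' := herr (1-x) h1x
  have hG'' : G' (1-x) = 1 - G x := by simp [hG'def]
  rw [hG''] at herr'
  have heq : |1 - p'.eval (1-x) - G x| = |p'.eval (1-x) - (1 - G x)| := by
    rw [show (1 - p'.eval (1-x) - G x) = -((p'.eval (1-x)) - (1 - G x)) by ring, abs_neg]
  rw [heq]
  exact herr'

lemma dense_step (f : C(Set.Icc (0:ℝ) 1, ℝ)) (hf : f ∈ F1) (ε : ℝ) (hε : 0 < ε) :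
    ∃ p : Polynomial ℝ, memP p ∧ ∀ x : Set.Icc (0:ℝ) 1, |p.eval ↑x - f x| < ε := by
  obtain ⟨hf0, hf1, hfr⟩ := hf
  set F : ℝ → ℝ := fun t => f (Set.projIcc (0:ℝ) 1 zero_le_one t) with hFdef
  have hFcont : Continuous F := f.continuous.comp continuous_projIcc
  have hF0 : F 0 = 0 := by
    simp only [hFdef]
    rw [Set.projIcc_left]
    exact hf0
  have hF1 : F 1 = 1 := by
    simp only [hFdef]
    rw [Set.projIcc_right]
    exact hf1
  have hFr : ∀ t : ℝ, F t ∈ Set.Icc (0:ℝ) 1 := fun t => hfr _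
  have hFval : ∀ x : Set.Icc (0:ℝ) 1, F ↑x = f x := by
    intro x
    simp only [hFdef]
    congr 1
    rw [Set.projIcc_of_mem zero_le_one x.2]
  set η := min (ε/4) (1/2 : ℝ) with hηdef
  have hη0 : 0 < η := lt_min (by linarith) (by norm_num)
  have hη1 : η < 1 := lt_of_le_of_lt (min_le_right _ _) (by norm_num)
  have hηε : η ≤ ε/4 := min_le_left _ _
  obtain ⟨g1, g2, hg1c, hg10, hg1b, hg2c, hg21, hg2b, hcomp⟩ :=
    exists_decomp F hFcont hF0 hF1 hFr η hη0 hη1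
  -- uniform continuity of g1 on [0,1]
  have huc := (isCompact_Icc : IsCompact (Set.Icc (0:ℝ) 1)).uniformContinuousOn_of_continuous hg1c
  rw [Metric.uniformContinuousOn_iff] at huc
  obtain ⟨δ, hδ0, hδ⟩ := huc (ε/4) (by linarith)
  obtain ⟨p1, hp1, herr1⟩ := lemA g1 hg1c hg10 hg1b (ε/4) (by linarith)
  obtain ⟨p2, hp2, herr2⟩ := lemB g2 hg2c hg21 hg2b (δ/2) (by linarith)
  refine ⟨p1.comp p2, memP_comp hp1 hp2, ?_⟩
  intro x
  have hx : (↑x : ℝ) ∈ Set.Icc (0:ℝ) 1 := x.2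
  rw [eval_comp]
  set a := p2.eval ↑x with hadef
  have ha : a ∈ Set.Icc (0:ℝ) 1 := hp2.1 ↑x hx
  have hb : g2 ↑x ∈ Set.Icc (0:ℝ) 1 := by
    have := hg2b ↑x hx
    exact ⟨this.1, le_trans this.2 hx.2⟩
  have hab : dist a (g2 ↑x) < δ := by
    rw [Real.dist_eq]
    calc |a - g2 ↑x| ≤ δ/2 := herr2 ↑x hx
      _ < δ := by linarith
  have t1 : |p1.eval a - g1 a| ≤ ε/4 := herr1 a ha
  have t2 : |g1 a - g1 (g2 ↑x)| < ε/4 := by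
    have := hδ a ha (g2 ↑x) hb hab
    rwa [Real.dist_eq] at this
  have t3 : |g1 (g2 ↑x) - F ↑x| ≤ η := hcomp ↑x hx
  have hFx : F ↑x = f x := hFval x
  calc |p1.eval a - f x|
      = |(p1.eval a - g1 a) + ((g1 a - g1 (g2 ↑x)) + (g1 (g2 ↑x) - f x))| := by ring_nf
    _ ≤ |p1.eval a - g1 a| + |(g1 a - g1 (g2 ↑x)) + (g1 (g2 ↑x) - f x)| := abs_add_le _ _
    _ ≤ |p1.eval a - g1 a| + (|g1 a - g1 (g2 ↑x)| + |g1 (g2 ↑x) - f x|) := by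
        linarith [abs_add_le (g1 a - g1 (g2 ↑x)) (g1 (g2 ↑x) - f x)]
    _ < ε/4 + (ε/4 + (ε/4 + ε/4)) := by
        rw [← hFx]
        linarith [t1, t2, t3, hηε]
    _ ≤ ε := by linarith

theorem stmt_2 : closure PG = F1 := by
  apply Set.Subset.antisymm
  · apply closure_minimal
    · rintro g ⟨p, hp, rfl⟩
      obtain ⟨h1, h2, h3⟩ := hp
      refine ⟨?_, ?_, ?_⟩
      · have ha := h1 0 ⟨le_rfl, zero_le_one⟩
        have hb := h2 0 le_rfl
        have hz : p.eval 0 = 0 := le_antisymm hb ha.1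
        simpa using hz
      · have ha := h1 1 ⟨zero_le_one, le_rfl⟩
        have hb := h3 1 le_rfl
        have hz : p.eval 1 = 1 := le_antisymm ha.2 hb
        simpa using hz
      · intro x
        simpa using h1 ↑x x.2
    · have hF1eq : F1 = {f : C(Set.Icc (0:ℝ) 1, ℝ) | f ⟨0, by norm_num⟩ = 0} ∩
          ({f : C(Set.Icc (0:ℝ) 1, ℝ) | f ⟨1, by norm_num⟩ = 1} ∩
           {f : C(Set.Icc (0:ℝ) 1, ℝ) | ∀ x, f x ∈ Set.Icc (0:ℝ) 1}) := rfl
      rw [hF1eq]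
      refine IsClosed.inter ?_ (IsClosed.inter ?_ ?_)
      · exact isClosed_eq (continuous_eval_const _) continuous_const
      · exact isClosed_eq (continuous_eval_const _) continuous_const
      · have : {f : C(Set.Icc (0:ℝ) 1, ℝ) | ∀ x, f x ∈ Set.Icc (0:ℝ) 1}
            = ⋂ x, {f : C(Set.Icc (0:ℝ) 1, ℝ) | f x ∈ Set.Icc (0:ℝ) 1} := by
          ext f; simp
        rw [this]
        apply isClosed_iInter
        intro x
        exact IsClosed.preimage (continuous_eval_const x) isClosed_Icc
  · intro f hf
    rw [Metric.mem_closure_iff]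
    intro ε hε
    obtain ⟨p, hp, herr⟩ := dense_step f hf (ε/2) (by linarith)
    refine ⟨p.toContinuousMapOn _, ⟨p, hp, rfl⟩, ?_⟩
    rw [ContinuousMap.dist_lt_iff hε]
    intro x
    rw [Real.dist_eq]
    have := herr x
    rw [show (p.toContinuousMapOn (Set.Icc (0:ℝ) 1)) x = p.eval ↑x from rfl]
    rw [show |f x - p.eval ↑x| = |p.eval ↑x - f x| from abs_sub_comm _ _]
    linarith
end

section
/- Let A be a closed subset of [0,1], let ε > 0, and let f : A → ℝ be continuous with 0 ≤ f(x) ≤ 1 for all x ∈ A, f(0) = 0 if 0 ∈ A, and f(1) = 1 if 1 ∈ A. Then there exists a polynomial p ∈ 𝒫′ with sup_{x∈A} |p(x) − f(x)| < ε. -/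
open Polynomial Finset Topology Filter

noncomputable def bb (n k : ℕ) (x : ℝ) : ℝ := (n.choose k : ℝ) * x ^ k * (1 - x) ^ (n - k)

lemma bb_eval (n k : ℕ) (x : ℝ) : (bernsteinPolynomial ℝ n k).eval x = bb n k x := by
  simp [bernsteinPolynomial, bb]

lemma bb_sum (n : ℕ) (x : ℝ) : ∑ k ∈ range (n+1), bb n k x = 1 := by
  have := congrArg (Polynomial.eval x) (bernsteinPolynomial.sum ℝ n)
  simpa [Polynomial.eval_finset_sum, bb_eval] using this

lemma bb_sum_smul (n : ℕ) (x : ℝ) : ∑ k ∈ range (n+1), (k : ℝ) * bb n k x = n * x := by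
  have := congrArg (Polynomial.eval x) (bernsteinPolynomial.sum_smul ℝ n)
  simpa [Polynomial.eval_finset_sum, bb_eval, mul_comm] using this

lemma bb_nonneg {n k : ℕ} {x : ℝ} (h0 : 0 ≤ x) (h1 : x ≤ 1) : 0 ≤ bb n k x := by
  have h2 : (0:ℝ) ≤ 1 - x := by linarith
  unfold bb; positivity

noncomputable def bq (h : ℝ → ℝ) (n : ℕ) : Polynomial ℝ :=
  ∑ k ∈ range (n+1), Polynomial.C (h ((k:ℝ)/(n:ℝ))) * bernsteinPolynomial ℝ n k

lemma bq_eval (h : ℝ → ℝ) (n : ℕ) (x : ℝ) :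
    (bq h n).eval x = ∑ k ∈ range (n+1), h ((k:ℝ)/(n:ℝ)) * bb n k x := by
  simp [bq, Polynomial.eval_finset_sum, bb_eval]

section L12
variable {h : ℝ → ℝ} {δ : ℝ} {n : ℕ}

lemma kdiv_mem (hn : 0 < n) {k : ℕ} (hk : k ∈ range (n+1)) :
    0 ≤ (k:ℝ)/(n:ℝ) ∧ (k:ℝ)/(n:ℝ) ≤ 1 := by
  have hk' : (k:ℝ) ≤ n := by exact_mod_cast Nat.lt_succ_iff.mp (mem_range.mp hk)
  have hn' : (0:ℝ) < n := by exact_mod_cast hn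
  constructor
  · positivity
  · rw [div_le_one hn']; exact hk'

lemma bq_lower (hn : 0 < n) (H3 : ∀ t, 0 ≤ t → t ≤ 1 → δ*t ≤ h t)
    {x : ℝ} (hx0 : 0 ≤ x) (hx1 : x ≤ 1) : δ * x ≤ (bq h n).eval x := by
  have hn' : (0:ℝ) < n := by exact_mod_cast hn
  have key : ∑ k ∈ range (n+1), (δ/n) * ((k:ℝ) * bb n k x) ≤
      ∑ k ∈ range (n+1), h ((k:ℝ)/(n:ℝ)) * bb n k x := by
    apply Finset.sum_le_sum
    intro k hk
    obtain ⟨hk0, hk1⟩ := kdiv_mem hn hk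
    have := H3 _ hk0 hk1
    have hb := bb_nonneg (n := n) (k := k) hx0 hx1
    have : δ/n * (k:ℝ) ≤ h ((k:ℝ)/(n:ℝ)) := by
      calc δ/n * (k:ℝ) = δ * ((k:ℝ)/(n:ℝ)) := by ring
      _ ≤ _ := this
    nlinarith
  rw [bq_eval]
  calc δ * x = (δ/n) * ((n:ℝ) * x) := by field_simp
  _ = ∑ k ∈ range (n+1), (δ/n) * ((k:ℝ) * bb n k x) := by rw [← Finset.mul_sum, bb_sum_smul]
  _ ≤ _ := key

lemma bq_upper (hn : 0 < n) (H4 : ∀ t, 0 ≤ t → t ≤ 1 → h t ≤ 1 - δ*(1-t))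
    {x : ℝ} (hx0 : 0 ≤ x) (hx1 : x ≤ 1) : (bq h n).eval x ≤ 1 - δ * (1-x) := by
  have hn' : (0:ℝ) < n := by exact_mod_cast hn
  have key : ∑ k ∈ range (n+1), h ((k:ℝ)/(n:ℝ)) * bb n k x ≤
      ∑ k ∈ range (n+1), ((1-δ) * bb n k x + (δ/n) * ((k:ℝ) * bb n k x)) := by
    apply Finset.sum_le_sum
    intro k hk
    obtain ⟨hk0, hk1⟩ := kdiv_mem hn hk
    have hh := H4 _ hk0 hk1
    have hb := bb_nonneg (n := n) (k := k) hx0 hx1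
    have h2 : h ((k:ℝ)/(n:ℝ)) ≤ (1-δ) + (δ/n) * (k:ℝ) := by
      have : 1 - δ*(1-(k:ℝ)/(n:ℝ)) = (1-δ) + (δ/n)*(k:ℝ) := by field_simp; ring
      linarith [this ▸ hh]
    nlinarith
  rw [bq_eval]
  calc ∑ k ∈ range (n+1), h ((k:ℝ)/(n:ℝ)) * bb n k x ≤ _ := key
  _ = (1-δ) * (∑ k ∈ range (n+1), bb n k x) + (δ/n) * ∑ k ∈ range (n+1), ((k:ℝ) * bb n k x) := by
      rw [Finset.sum_add_distrib, Finset.mul_sum, Finset.mul_sum]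
  _ = (1-δ) + (δ/n) * ((n:ℝ)*x) := by rw [bb_sum, bb_sum_smul, mul_one]
  _ = 1 - δ * (1-x) := by field_simp; ring
end L12

section L345
variable {h : ℝ → ℝ} {δ : ℝ} {n : ℕ}

-- global bound
lemma bq_global {w : ℕ → ℝ} (hw : ∀ k ∈ range (n+1), |w k| ≤ 1) (x : ℝ) :
    |∑ k ∈ range (n+1), w k * bb n k x| ≤ (2 + 2*|x|)^n := by
  calc |∑ k ∈ range (n+1), w k * bb n k x| ≤ ∑ k ∈ range (n+1), |w k * bb n k x| :=
      Finset.abs_sum_le_sum_abs _ _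
  _ ≤ ∑ k ∈ range (n+1), (n.choose k : ℝ) * (1+|x|)^n := by
      apply Finset.sum_le_sum
      intro k hk
      have hk' : k ≤ n := Nat.lt_succ_iff.mp (mem_range.mp hk)
      have h1 : |x|^k ≤ (1+|x|)^k := by
        apply pow_le_pow_left₀ (abs_nonneg x); linarith
      have h2 : |1-x|^(n-k) ≤ (1+|x|)^(n-k) := by
        apply pow_le_pow_left₀ (abs_nonneg _)
        calc |1-x| ≤ |(1:ℝ)| + |x| := abs_sub _ _
        _ = 1 + |x| := by rw [abs_one]
      have h3 : (1+|x|)^k * (1+|x|)^(n-k) = (1+|x|)^n := by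
        rw [← pow_add]; congr 1; omega
      have h4 : |w k * bb n k x| = |w k| * ((n.choose k:ℝ) * (|x|^k * |1-x|^(n-k))) := by
        rw [abs_mul]; unfold bb
        rw [abs_mul, abs_mul, abs_pow, abs_pow, Nat.abs_cast]; ring
      rw [h4]
      have hwk := hw k hk
      have hc : (0:ℝ) ≤ n.choose k := by positivity
      have hx1 : (0:ℝ) ≤ |x| ^ k := by positivity
      have key : |x|^k * |1-x|^(n-k) ≤ (1+|x|)^n := by
        rw [← h3]
        have := pow_le_pow_left₀ (abs_nonneg (1-x)) (show |1-x| ≤ 1+|x| from by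
          calc |1-x| ≤ |(1:ℝ)| + |x| := abs_sub _ _
          _ = 1 + |x| := by rw [abs_one]) (n-k)
        calc |x|^k * |1-x|^(n-k) ≤ (1+|x|)^k * |1-x|^(n-k) := by
              apply mul_le_mul_of_nonneg_right h1 (by positivity)
        _ ≤ (1+|x|)^k * (1+|x|)^(n-k) := by
              apply mul_le_mul_of_nonneg_left this (by positivity)
      calc |w k| * ((n.choose k:ℝ) * (|x|^k * |1-x|^(n-k)))
          ≤ 1 * ((n.choose k:ℝ) * (1+|x|)^n) := by
            apply mul_le_mul hwk _ (by positivity) zero_le_one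
            exact mul_le_mul_of_nonneg_left key hc
      _ = (n.choose k:ℝ) * (1+|x|)^n := one_mul _
  _ = (2:ℝ)^n * (1+|x|)^n := by
      rw [← Finset.sum_mul]
      congr 1
      have := Nat.sum_range_choose n
      exact_mod_cast congrArg (Nat.cast : ℕ → ℝ) this
  _ = (2 + 2*|x|)^n := by rw [← mul_pow]; ring_nf

-- left quadratic bound, x ∈ [-1, 0]
lemma bq_left (hn : 0 < n) (hδ0 : 0 < δ)
    (H0 : h 0 = 0) (H3 : ∀ t, 0 ≤ t → t ≤ 1 → δ*t ≤ h t)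
    (Hb : ∀ t, 0 ≤ t → t ≤ 1 → 0 ≤ h t ∧ h t ≤ 1)
    {x : ℝ} (hx0 : -1 ≤ x) (hx1 : x ≤ 0) :
    (bq h n).eval x ≤ δ * x + 4^n * x^2 := by
  have hn' : (0:ℝ) < n := by exact_mod_cast hn
  rw [bq_eval]
  have h1mem : 1 ∈ range (n+1) := mem_range.mpr (by omega)
  rw [← Finset.add_sum_erase _ _ h1mem]
  have term1 : h ((1:ℕ)/(n:ℝ)) * bb n 1 x ≤ δ * x := by
    have hm : 0 ≤ (1:ℝ)/n ∧ (1:ℝ)/n ≤ 1 := by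
      constructor
      · positivity
      · rw [div_le_one hn']; exact_mod_cast hn
    have hδn : δ ≤ h (1/(n:ℝ)) * n := by
      have := H3 _ hm.1 hm.2
      calc δ = δ * (1/(n:ℝ)) * n := by field_simp
      _ ≤ h (1/(n:ℝ)) * n := by
          apply mul_le_mul_of_nonneg_right this (le_of_lt hn')
    have hb1 : bb n 1 x = (n:ℝ) * x * (1-x)^(n-1) := by
      unfold bb; rw [Nat.choose_one_right]; ring
    have hpow : (1:ℝ) ≤ (1-x)^(n-1) := one_le_pow₀ (by linarith)
    have hA : h ((1:ℕ)/(n:ℝ)) * ((n:ℝ) * x) ≤ δ * x := by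
      push_cast
      nlinarith [mul_le_mul_of_nonpos_right hδn hx1]
    have hA0 : h ((1:ℕ)/(n:ℝ)) * ((n:ℝ) * x) ≤ 0 := by
      push_cast
      nlinarith [mul_le_mul_of_nonpos_right hδn hx1, hδ0.le, hx1]
    calc h ((1:ℕ)/(n:ℝ)) * bb n 1 x = (h ((1:ℕ)/(n:ℝ)) * ((n:ℝ) * x)) * (1-x)^(n-1) := by
          rw [hb1]; ring
    _ ≤ (h ((1:ℕ)/(n:ℝ)) * ((n:ℝ) * x)) * 1 := by
          nlinarith [hA0, hpow]
    _ ≤ δ * x := by rw [mul_one]; exact hA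
  have rest : ∑ k ∈ (range (n+1)).erase 1, h ((k:ℝ)/(n:ℝ)) * bb n k x ≤ 4^n * x^2 := by
    have step : ∀ k ∈ (range (n+1)).erase 1,
        h ((k:ℝ)/(n:ℝ)) * bb n k x ≤ (n.choose k : ℝ) * (2^n * x^2) := by
      intro k hk
      obtain ⟨hk1, hkr⟩ := Finset.mem_erase.mp hk
      have hkn : k ≤ n := Nat.lt_succ_iff.mp (mem_range.mp hkr)
      by_cases hk0 : k = 0
      · subst hk0
        simp only [Nat.cast_zero, zero_div, H0, zero_mul]
        positivity
      · -- k ≥ 2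
        have hk2 : 2 ≤ k := by omega
        have hmem := kdiv_mem hn hkr
        have hhk : |h ((k:ℝ)/(n:ℝ))| ≤ 1 := by
          have := Hb _ hmem.1 hmem.2; rw [abs_le]; constructor <;> linarith [this.1, this.2]
        have e1 : |x|^k ≤ x^2 := by
          have : |x| ≤ 1 := abs_le.mpr ⟨hx0, hx1.trans zero_le_one⟩
          calc |x|^k ≤ |x|^2 := pow_le_pow_of_le_one (abs_nonneg x) this hk2
          _ = x^2 := sq_abs x
        have e2 : |1-x|^(n-k) ≤ 2^n := by
          have h12 : |1-x| ≤ 2 := by rw [abs_of_nonneg (by linarith)]; linarith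
          calc |1-x|^(n-k) ≤ 2^(n-k) := pow_le_pow_left₀ (abs_nonneg _) h12 _
          _ ≤ 2^n := pow_le_pow_right₀ one_le_two (Nat.sub_le n k)
        calc h ((k:ℝ)/(n:ℝ)) * bb n k x ≤ |h ((k:ℝ)/(n:ℝ)) * bb n k x| := le_abs_self _
        _ = |h ((k:ℝ)/(n:ℝ))| * ((n.choose k:ℝ) * (|x|^k * |1-x|^(n-k))) := by
            rw [abs_mul]; unfold bb
            rw [abs_mul, abs_mul, abs_pow, abs_pow, Nat.abs_cast]; ring
        _ ≤ 1 * ((n.choose k:ℝ) * (x^2 * 2^n)) := by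
            apply mul_le_mul hhk _ (by positivity) zero_le_one
            apply mul_le_mul_of_nonneg_left _ (by positivity)
            calc |x|^k * |1-x|^(n-k) ≤ x^2 * |1-x|^(n-k) :=
                  mul_le_mul_of_nonneg_right e1 (by positivity)
            _ ≤ x^2 * 2^n := mul_le_mul_of_nonneg_left e2 (by positivity)
        _ = (n.choose k : ℝ) * (2^n * x^2) := by ring
    calc ∑ k ∈ (range (n+1)).erase 1, h ((k:ℝ)/(n:ℝ)) * bb n k x
        ≤ ∑ k ∈ (range (n+1)).erase 1, (n.choose k : ℝ) * (2^n * x^2) :=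
          Finset.sum_le_sum step
    _ ≤ ∑ k ∈ range (n+1), (n.choose k : ℝ) * (2^n * x^2) := by
          apply Finset.sum_le_sum_of_subset_of_nonneg (Finset.erase_subset _ _)
          intro k _ _; positivity
    _ = 2^n * (2^n * x^2) := by
          rw [← Finset.sum_mul]
          congr 1
          exact_mod_cast congrArg (Nat.cast : ℕ → ℝ) (Nat.sum_range_choose n)
    _ = 4^n * x^2 := by
          rw [← mul_assoc, ← pow_add]
          congr 1
          rw [show n+n = 2*n by ring, pow_mul]
          norm_num
  push_cast at term1 ⊢
  linarith

lemma bq_one_sub (x : ℝ) :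
    1 - (bq h n).eval x = ∑ k ∈ range (n+1), (1 - h ((k:ℝ)/(n:ℝ))) * bb n k x := by
  rw [bq_eval]
  have : ∑ k ∈ range (n+1), (1 - h ((k:ℝ)/(n:ℝ))) * bb n k x
      = ∑ k ∈ range (n+1), (bb n k x - h ((k:ℝ)/(n:ℝ)) * bb n k x) := by
    apply Finset.sum_congr rfl; intro k _; ring
  rw [this, Finset.sum_sub_distrib, bb_sum]

-- right quadratic bound, x ∈ [1, 2]
lemma bq_right (hn : 0 < n) (hδ0 : 0 < δ)
    (H1 : h 1 = 1) (H4 : ∀ t, 0 ≤ t → t ≤ 1 → h t ≤ 1 - δ*(1-t))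
    (Hb : ∀ t, 0 ≤ t → t ≤ 1 → 0 ≤ h t ∧ h t ≤ 1)
    {x : ℝ} (hx0 : 1 ≤ x) (hx1 : x ≤ 2) :
    1 - (bq h n).eval x ≤ δ * (1-x) + 4^n * (x-1)^2 := by
  have hn' : (0:ℝ) < n := by exact_mod_cast hn
  rw [bq_one_sub]
  have hmem : n - 1 ∈ range (n+1) := mem_range.mpr (by omega)
  rw [← Finset.add_sum_erase _ _ hmem]
  set c : ℝ := 1 - h (((n-1:ℕ):ℝ)/(n:ℝ)) with hc
  have hcast : ((n-1:ℕ):ℝ) = (n:ℝ) - 1 := by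
    have : 1 ≤ n := hn
    push_cast [Nat.cast_sub this]; ring
  have hδc : δ ≤ c * n := by
    have hm : 0 ≤ ((n:ℝ)-1)/n ∧ ((n:ℝ)-1)/n ≤ 1 := by
      constructor
      · apply div_nonneg _ hn'.le
        have : (1:ℝ) ≤ n := by exact_mod_cast hn
        linarith
      · rw [div_le_one hn']; linarith
    have := H4 _ hm.1 hm.2
    have e : 1 - ((n:ℝ)-1)/n = 1/n := by field_simp; ring
    rw [e] at this
    have : δ * (1/(n:ℝ)) ≤ 1 - h (((n:ℝ)-1)/n) := by linarith
    have h2 : δ ≤ (1 - h (((n:ℝ)-1)/n)) * n := by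
      calc δ = δ * (1/(n:ℝ)) * n := by field_simp
      _ ≤ _ := mul_le_mul_of_nonneg_right this hn'.le
    rw [hc, hcast]; exact h2
  have term1 : c * bb n (n-1) x ≤ δ * (1-x) := by
    have hb1 : bb n (n-1) x = (n:ℝ) * x^(n-1) * (1-x) := by
      unfold bb
      rw [show n - (n-1) = 1 by omega, pow_one]
      have : n.choose (n-1) = n := by
        rw [← Nat.choose_symm (by omega : n - 1 ≤ n), show n - (n-1) = 1 by omega,
          Nat.choose_one_right]
      rw [this]
    have hpow : (1:ℝ) ≤ x^(n-1) := one_le_pow₀ hx0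
    have hA : c * ((n:ℝ) * (1-x)) ≤ δ * (1-x) := by
      nlinarith [mul_le_mul_of_nonpos_right hδc (show 1-x ≤ 0 by linarith)]
    have hA0 : c * ((n:ℝ) * (1-x)) ≤ 0 := by
      nlinarith [hA, hδ0.le, hx0]
    calc c * bb n (n-1) x = (c * ((n:ℝ) * (1-x))) * x^(n-1) := by rw [hb1]; ring
    _ ≤ (c * ((n:ℝ) * (1-x))) * 1 := by nlinarith [hA0, hpow]
    _ ≤ δ * (1-x) := by rw [mul_one]; exact hA
  have rest : ∑ k ∈ (range (n+1)).erase (n-1), (1 - h ((k:ℝ)/(n:ℝ))) * bb n k x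
      ≤ 4^n * (x-1)^2 := by
    have step : ∀ k ∈ (range (n+1)).erase (n-1),
        (1 - h ((k:ℝ)/(n:ℝ))) * bb n k x ≤ (n.choose k : ℝ) * (2^n * (x-1)^2) := by
      intro k hk
      obtain ⟨hk1, hkr⟩ := Finset.mem_erase.mp hk
      have hkn : k ≤ n := Nat.lt_succ_iff.mp (mem_range.mp hkr)
      by_cases hkeq : k = n
      · subst hkeq
        have : ((k:ℝ))/(k:ℝ) = 1 := by
          field_simp
        rw [this, H1, sub_self, zero_mul]
        positivity
      · have hk2 : 2 ≤ n - k := by omega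
        have hmem2 := kdiv_mem hn hkr
        have hhk : |1 - h ((k:ℝ)/(n:ℝ))| ≤ 1 := by
          have := Hb _ hmem2.1 hmem2.2
          rw [abs_le]; constructor <;> linarith [this.1, this.2]
        have e1 : x^k ≤ 2^n := by
          calc x^k ≤ 2^k := pow_le_pow_left₀ (by linarith) hx1 _
          _ ≤ 2^n := pow_le_pow_right₀ one_le_two hkn
        have e2 : |1-x|^(n-k) ≤ (x-1)^2 := by
          rw [abs_of_nonpos (by linarith), neg_sub]
          exact pow_le_pow_of_le_one (by linarith) (by linarith) hk2
        calc (1 - h ((k:ℝ)/(n:ℝ))) * bb n k x ≤ |(1 - h ((k:ℝ)/(n:ℝ))) * bb n k x| :=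
              le_abs_self _
        _ = |1 - h ((k:ℝ)/(n:ℝ))| * ((n.choose k:ℝ) * (|x|^k * |1-x|^(n-k))) := by
            rw [abs_mul]; unfold bb
            rw [abs_mul, abs_mul, abs_pow, abs_pow, Nat.abs_cast]; ring
        _ ≤ 1 * ((n.choose k:ℝ) * (2^n * (x-1)^2)) := by
            apply mul_le_mul hhk _ (by positivity) zero_le_one
            apply mul_le_mul_of_nonneg_left _ (by positivity)
            rw [abs_of_nonneg (by linarith : (0:ℝ) ≤ x)]
            calc x^k * |1-x|^(n-k) ≤ x^k * (x-1)^2 :=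
                  mul_le_mul_of_nonneg_left e2 (by positivity)
            _ ≤ 2^n * (x-1)^2 := mul_le_mul_of_nonneg_right e1 (by positivity)
        _ = (n.choose k : ℝ) * (2^n * (x-1)^2) := by ring
    calc ∑ k ∈ (range (n+1)).erase (n-1), (1 - h ((k:ℝ)/(n:ℝ))) * bb n k x
        ≤ ∑ k ∈ (range (n+1)).erase (n-1), (n.choose k : ℝ) * (2^n * (x-1)^2) :=
          Finset.sum_le_sum step
    _ ≤ ∑ k ∈ range (n+1), (n.choose k : ℝ) * (2^n * (x-1)^2) := by
          apply Finset.sum_le_sum_of_subset_of_nonneg (Finset.erase_subset _ _)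
          intro k _ _; positivity
    _ = 2^n * (2^n * (x-1)^2) := by
          rw [← Finset.sum_mul]
          congr 1
          exact_mod_cast congrArg (Nat.cast : ℕ → ℝ) (Nat.sum_range_choose n)
    _ = 4^n * (x-1)^2 := by
          rw [← mul_assoc, ← pow_add]
          congr 1
          rw [show n+n = 2*n by ring, pow_mul]
          norm_num
  exact add_le_add term1 rest

end L345

section Approx
open unitInterval

lemma bq_approx (h : ℝ → ℝ) (hcont : Continuous h) {ε' : ℝ} (hε' : 0 < ε') :
    ∃ n : ℕ, 0 < n ∧ ∀ x : ℝ, 0 ≤ x → x ≤ 1 → |(bq h n).eval x - h x| ≤ ε' := by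
  set hC : C(I, ℝ) := ⟨fun x => h x.val, hcont.comp continuous_subtype_val⟩ with hhC
  obtain ⟨N, hN⟩ := Metric.tendsto_atTop.mp (bernsteinApproximation_uniform hC) ε' hε'
  refine ⟨N + 1, Nat.succ_pos N, ?_⟩
  intro x hx0 hx1
  set n := N + 1
  have hdist := hN n (Nat.le_succ N)
  have link : (bq h n).eval x = bernsteinApproximation n hC ⟨x, ⟨hx0, hx1⟩⟩ := by
    rw [bernsteinApproximation.apply, bq_eval, Finset.sum_range]
    apply Finset.sum_congr rfl
    intro k _
    have h2 : bernstein n k ⟨x,⟨hx0,hx1⟩⟩ = bb n k x := by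
      rw [bernstein_apply]; unfold bb; norm_num
    have h1 : hC (bernstein.z k) = h (((k:ℕ):ℝ)/(n:ℝ)) := rfl
    rw [h1, h2, smul_eq_mul, mul_comm]
  have : |(bq h n).eval x - h x| = dist (bernsteinApproximation n hC ⟨x, ⟨hx0, hx1⟩⟩)
      (hC ⟨x, ⟨hx0, hx1⟩⟩) := by
    rw [link, Real.dist_eq]
    congr 1
  rw [this]
  exact le_of_lt (lt_of_le_of_lt (ContinuousMap.dist_apply_le_dist _) hdist)

end Approx

/-- 𝒫′ (copy of target def for the aux lemma). -/
def memP'aux (p : Polynomial ℝ) : Prop :=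
  (∀ x ∈ Set.Ioo (0:ℝ) 1, p.eval x ∈ Set.Ioo (0:ℝ) 1) ∧
  (∀ x : ℝ, x < 0 → p.eval x < 0) ∧
  (∀ x : ℝ, 1 < x → 1 < p.eval x)

set_option maxHeartbeats 2000000 in
lemma core (h : ℝ → ℝ) (hcont : Continuous h) {δ : ℝ} (hδ0 : 0 < δ) (hδ1 : δ ≤ 1/2)
    (H0 : h 0 = 0) (H1 : h 1 = 1)
    (H3 : ∀ t, 0 ≤ t → t ≤ 1 → δ*t ≤ h t)
    (H4 : ∀ t, 0 ≤ t → t ≤ 1 → h t ≤ 1 - δ*(1-t)) :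
    ∃ p : Polynomial ℝ, memP'aux p ∧ ∀ x, 0 ≤ x → x ≤ 1 → |p.eval x - h x| ≤ δ := by
  have Hb : ∀ t, 0 ≤ t → t ≤ 1 → 0 ≤ h t ∧ h t ≤ 1 := by
    intro t ht0 ht1
    constructor
    · have := H3 t ht0 ht1; nlinarith
    · have := H4 t ht0 ht1; nlinarith
  obtain ⟨n, hn, happrox⟩ := bq_approx h hcont (half_pos hδ0)
  set q := bq h n with hq
  set c : ℝ := δ/4 with hcdef
  have hc0 : 0 < c := by positivity
  set r : ℝ := min 1 (δ/(2*4^n)) with hrdef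
  have h4n : (0:ℝ) < 4^n := by positivity
  have hr0 : 0 < r := lt_min one_pos (by positivity)
  have hr1 : r ≤ 1 := min_le_left _ _
  have hr2 : 4^n * r ≤ δ/2 := by
    have : r ≤ δ/(2*4^n) := min_le_right _ _
    calc 4^n * r ≤ 4^n * (δ/(2*4^n)) := by nlinarith
    _ = δ/2 := by field_simp
  obtain ⟨a₁, ha₁⟩ := pow_unbounded_of_one_lt ((6:ℝ)^n/(c*r)) (by linarith : (1:ℝ) < 1+r)
  obtain ⟨a₂, ha₂⟩ := pow_unbounded_of_one_lt (2*(6:ℝ)^n/c) (one_lt_two)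
  set a : ℕ := 2*(a₁ + a₂ + n + 1) with hadef
  have haeven : Even a := ⟨a₁+a₂+n+1, by omega⟩
  have han : n ≤ a := by omega
  have ha1' : 1 ≤ a := by omega
  have hC1 : (6:ℝ)^n < c*r*(1+r)^a := by
    have hbase : (1:ℝ) ≤ 1 + r := by linarith
    have hmono : (1+r)^a₁ ≤ (1+r)^a := pow_le_pow_right₀ hbase (by omega)
    have hcr : 0 < c*r := by positivity
    rw [div_lt_iff₀ hcr] at ha₁
    calc (6:ℝ)^n < (1+r)^a₁ * (c*r) := ha₁
    _ ≤ (1+r)^a * (c*r) := by nlinarith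
    _ = c*r*(1+r)^a := by ring
  have hC2 : 2*(6:ℝ)^n < c*2^a := by
    have hmono : (2:ℝ)^a₂ ≤ 2^a := pow_le_pow_right₀ one_le_two (by omega)
    rw [div_lt_iff₀ hc0] at ha₂
    calc 2*(6:ℝ)^n < 2^a₂ * c := ha₂
    _ ≤ 2^a * c := by nlinarith
    _ = c*2^a := by ring
  -- even power facts
  have hevenpow : ∀ y : ℝ, (y-1)^a = (1-y)^a := by
    intro y
    rw [show y - 1 = -(1-y) by ring, haeven.neg_pow]
  have hevennn : ∀ y : ℝ, (0:ℝ) ≤ (y-1)^a := fun y => haeven.pow_nonneg _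
  set p : Polynomial ℝ :=
    q + Polynomial.C c * (Polynomial.X^a*(Polynomial.X-1) + Polynomial.X*(Polynomial.X-1)^a)
    with hpdef
  have peval : ∀ x : ℝ, p.eval x = q.eval x + c*(x^a*(x-1) + x*(x-1)^a) := by
    intro x; simp [hpdef]
  -- global bounds
  have G1 : ∀ x : ℝ, |q.eval x| ≤ (2+2*|x|)^n := by
    intro x
    rw [hq, bq_eval]
    apply bq_global
    intro k hk
    obtain ⟨hk0, hk1⟩ := kdiv_mem hn hk
    have := Hb _ hk0 hk1
    rw [abs_le]; constructor <;> linarith [this.1, this.2]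
  have G2 : ∀ x : ℝ, |1 - q.eval x| ≤ (2+2*|x|)^n := by
    intro x
    rw [hq, bq_one_sub]
    apply bq_global
    intro k hk
    obtain ⟨hk0, hk1⟩ := kdiv_mem hn hk
    have := Hb _ hk0 hk1
    rw [abs_le]; constructor <;> linarith [this.1, this.2]
  refine ⟨p, ⟨?_, ?_, ?_⟩, ?_⟩
  · -- interior
    rintro x ⟨hx0, hx1⟩
    have hql := bq_lower hn H3 hx0.le hx1.le
    have hqu := bq_upper hn H4 hx0.le hx1.le
    have hxa : x^a ≤ x := by
      calc x^a ≤ x^1 := pow_le_pow_of_le_one hx0.le hx1.le ha1'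
      _ = x := pow_one x
    have hxa0 : 0 ≤ x^a := by positivity
    have h1xa : (x-1)^a ≤ 1-x := by
      rw [hevenpow]
      calc (1-x)^a ≤ (1-x)^1 := pow_le_pow_of_le_one (by linarith) (by linarith) ha1'
      _ = 1-x := pow_one _
    have h1xa0 : 0 ≤ (x-1)^a := hevennn x
    rw [Set.mem_Ioo, peval]
    constructor
    · -- lower:  q + c(A+B) ≥ δx - c x > 0
      have hA : -x ≤ x^a*(x-1) := by nlinarith
      have hB : 0 ≤ x*(x-1)^a := by positivity
      nlinarith
    · have hA : x^a*(x-1) ≤ 0 := by nlinarith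
      have hB : x*(x-1)^a ≤ 1-x := by nlinarith
      nlinarith
  · -- x < 0
    intro x hx
    rw [peval]
    have hA : x^a*(x-1) ≤ 0 := by nlinarith [pow_nonneg (le_of_lt (by linarith : (0:ℝ) < 1)) a, haeven.pow_nonneg x]
    rcases le_or_gt x (-1) with hcase | hcase
    · -- x ≤ -1
      have hu : (2:ℝ) ≤ 1 - x := by linarith
      have hq1 : q.eval x ≤ 2^n * (1-x)^n := by
        have := (abs_le.mp (G1 x)).2
        have habs : |x| = -x := abs_of_neg hx
        calc q.eval x ≤ (2+2*|x|)^n := this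
        _ = 2^n * (1-x)^n := by rw [habs, show 2+2*(-x) = 2*(1-x) by ring, mul_pow]
      have hB : x*(x-1)^a ≤ -((1-x)^a) := by
        rw [hevenpow]
        nlinarith [pow_nonneg (by linarith : (0:ℝ) ≤ 1-x) a]
      have hsplit : (1-x)^a = (1-x)^(a-n) * (1-x)^n := by
        rw [← pow_add]; congr 1; omega
      have h2an : (2:ℝ)^(a-n) ≤ (1-x)^(a-n) := pow_le_pow_left₀ (by norm_num) hu _
      have h2a : (2:ℝ)^a = 2^(a-n) * 2^n := by rw [← pow_add]; congr 1; omega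
      have hun : (0:ℝ) < (1-x)^n := pow_pos (by linarith) n
      have h6n : (2:ℝ)^n * 2^n ≤ 6^n := by
        rw [← mul_pow]; apply pow_le_pow_left₀ (by norm_num) (by norm_num)
      -- c*(1-x)^a ≥ c*2^(a-n)*(1-x)^n > 2*6^n/2^n * (1-x)^n ≥ 2*2^n*(1-x)^n
      have key : 2^n * (1-x)^n < c * (1-x)^a := by
        rw [hsplit]
        have e1 : c * (2^(a-n) * (1-x)^n) ≤ c * ((1-x)^(a-n) * (1-x)^n) := by
          apply mul_le_mul_of_nonneg_left _ hc0.le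
          exact mul_le_mul_of_nonneg_right h2an hun.le
        have h2n : (0:ℝ) < 2^n := by positivity
        have e4 : 2*(6:ℝ)^n < c * (2^(a-n) * 2^n) := by rw [← h2a]; exact hC2
        have e5 : (2:ℝ)^n < c * 2^(a-n) := by nlinarith
        have e6 : (2:ℝ)^n * (1-x)^n < (c * 2^(a-n)) * (1-x)^n :=
          mul_lt_mul_of_pos_right e5 hun
        nlinarith
      nlinarith
    · -- -1 < x ≤ -r or -r < x < 0
      rcases le_or_gt x (-r) with hcase2 | hcase2
      · -- -1 < x ≤ -r
        have hq1 : q.eval x ≤ 6^n := by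
          have := (abs_le.mp (G1 x)).2
          have habs : |x| ≤ 1 := abs_le.mpr ⟨by linarith, by linarith⟩
          calc q.eval x ≤ (2+2*|x|)^n := this
          _ ≤ 6^n := by apply pow_le_pow_left₀ (by positivity) (by linarith)
        have hB : x*(x-1)^a ≤ -r*(1+r)^a := by
          rw [hevenpow]
          have e1 : (1+r)^a ≤ (1-x)^a := pow_le_pow_left₀ (by linarith) (by linarith) _
          have e2 : x*(1-x)^a ≤ -r*(1-x)^a := by
            apply mul_le_mul_of_nonneg_right hcase2 (pow_nonneg (by linarith) a)
          calc x*(1-x)^a ≤ -r*(1-x)^a := e2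
          _ ≤ -r*(1+r)^a := by nlinarith
        nlinarith
      · -- -r < x < 0
        have hql := bq_left hn hδ0 H0 H3 Hb (by linarith) hx.le
        have hB : x*(x-1)^a ≤ 0 := by nlinarith [hevennn x]
        -- 4^n x² < 4^n r (-x) ≤ δ/2 (-x)
        have e0 : x^2 ≤ r*(-x) := by
          nlinarith [mul_pos (show (0:ℝ) < r+x by linarith) (show (0:ℝ) < -x by linarith)]
        have e1 : 4^n * x^2 ≤ 4^n * (r*(-x)) := mul_le_mul_of_nonneg_left e0 h4n.le
        have e2 : (4^n*r)*(-x) ≤ (δ/2)*(-x) :=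
          mul_le_mul_of_nonneg_right hr2 (by linarith)
        have e3 : c*(x^a*(x-1) + x*(x-1)^a) ≤ 0 :=
          mul_nonpos_of_nonneg_of_nonpos hc0.le (by linarith)
        nlinarith
  · -- 1 < x
    intro x hx
    rw [peval]
    have hA : 0 ≤ x^a*(x-1) := by
      have : (0:ℝ) ≤ x^a := le_of_lt (pow_pos (by linarith) a)
      nlinarith
    have hB : 0 ≤ x*(x-1)^a := by nlinarith [hevennn x]
    rcases le_or_gt 2 x with hcase | hcase
    · -- x ≥ 2
      have hq1 : 1 - q.eval x ≤ 3^n * x^n := by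
        have := (abs_le.mp (G2 x)).2
        have habs : |x| = x := abs_of_pos (by linarith)
        calc 1 - q.eval x ≤ (2+2*|x|)^n := this
        _ ≤ (3*x)^n := by
            apply pow_le_pow_left₀ (by rw [habs]; positivity) (by rw [habs]; linarith)
        _ = 3^n * x^n := mul_pow 3 x n
      have hA2 : x^a ≤ x^a * (x-1) := by nlinarith [pow_pos (show (0:ℝ) < x by linarith) a]
      have hsplit : x^a = x^(a-n) * x^n := by rw [← pow_add]; congr 1; omega
      have h2an : (2:ℝ)^(a-n) ≤ x^(a-n) := pow_le_pow_left₀ (by norm_num) hcase _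
      have h2a : (2:ℝ)^a = 2^(a-n) * 2^n := by rw [← pow_add]; congr 1; omega
      have hxn : (0:ℝ) < x^n := pow_pos (by linarith) n
      have key : 3^n * x^n < c * x^a := by
        rw [hsplit]
        have h2n : (0:ℝ) < 2^n := by positivity
        have e4 : 2*(6:ℝ)^n < c * (2^(a-n) * 2^n) := by rw [← h2a]; exact hC2
        have h6n : (6:ℝ)^n = 3^n * 2^n := by rw [← mul_pow]; norm_num
        -- c * 2^(a-n) > 2*6^n/2^n = 2*3^n > 3^n
        have e5 : 3^n * (2:ℝ)^n < c * 2^(a-n) * 2^n := by nlinarith [pow_pos (show (0:ℝ) < 3 by norm_num) n]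
        have e6 : (3:ℝ)^n < c * 2^(a-n) := by nlinarith
        calc (3:ℝ)^n * x^n < (c * 2^(a-n)) * x^n := by nlinarith
        _ ≤ c * (x^(a-n) * x^n) := by nlinarith [mul_le_mul_of_nonneg_right h2an hxn.le]
      nlinarith
    · rcases le_or_gt (1+r) x with hcase2 | hcase2
      · -- 1+r ≤ x < 2
        have hq1 : 1 - q.eval x ≤ 6^n := by
          have := (abs_le.mp (G2 x)).2
          have habs : |x| = x := abs_of_pos (by linarith)
          calc 1 - q.eval x ≤ (2+2*|x|)^n := this
          _ ≤ 6^n := by apply pow_le_pow_left₀ (by rw [habs]; positivity) (by rw [habs]; linarith)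
        have hA2 : c*r*(1+r)^a ≤ c*(x^a*(x-1)) := by
          have e1 : (1+r)^a ≤ x^a := pow_le_pow_left₀ (by linarith) hcase2 _
          have e2 : r ≤ x - 1 := by linarith
          have e3 : (0:ℝ) < (1+r)^a := pow_pos (by linarith) a
          have : r*(1+r)^a ≤ (x-1)*x^a := by nlinarith
          nlinarith
        nlinarith
      · -- 1 < x < 1+r ≤ 2
        have hqr := bq_right hn hδ0 H1 H4 Hb hx.le (by linarith)
        have e0 : (x-1)^2 ≤ r*(x-1) := by
          nlinarith [mul_pos (show (0:ℝ) < r-(x-1) by linarith) (show (0:ℝ) < x-1 by linarith)]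
        have e1 : 4^n * (x-1)^2 ≤ 4^n * (r*(x-1)) := mul_le_mul_of_nonneg_left e0 h4n.le
        have e2 : (4^n*r)*(x-1) ≤ (δ/2)*(x-1) :=
          mul_le_mul_of_nonneg_right hr2 (by linarith)
        have e3 : 0 ≤ c*(x^a*(x-1) + x*(x-1)^a) :=
          mul_nonneg hc0.le (by linarith)
        nlinarith
  · -- approximation on [0,1]
    intro x hx0 hx1
    have happ := happrox x hx0 hx1
    rw [peval]
    have hxa : x^a ≤ 1 := pow_le_one₀ hx0 hx1
    have hxa0 : 0 ≤ x^a := by positivity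
    have h1xa : (x-1)^a ≤ 1 := by
      rw [hevenpow]; exact pow_le_one₀ (by linarith) (by linarith)
    have h1xa0 : 0 ≤ (x-1)^a := hevennn x
    have hT : |x^a*(x-1) + x*(x-1)^a| ≤ 2 := by
      rw [abs_le]; constructor <;> nlinarith
    have : |q.eval x + c*(x^a*(x-1) + x*(x-1)^a) - h x|
        ≤ |q.eval x - h x| + c * |x^a*(x-1) + x*(x-1)^a| := by
      calc |q.eval x + c*(x^a*(x-1) + x*(x-1)^a) - h x|
          = |(q.eval x - h x) + c*(x^a*(x-1) + x*(x-1)^a)| := by ring_nf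
      _ ≤ |q.eval x - h x| + |c*(x^a*(x-1) + x*(x-1)^a)| := abs_add_le _ _
      _ = |q.eval x - h x| + c * |x^a*(x-1) + x*(x-1)^a| := by rw [abs_mul, abs_of_pos hc0]
    have hc2 : c * |x^a*(x-1) + x*(x-1)^a| ≤ c * 2 := by nlinarith [abs_nonneg (x^a*(x-1) + x*(x-1)^a)]
    calc |q.eval x + c*(x^a*(x-1) + x*(x-1)^a) - h x|
        ≤ |q.eval x - h x| + c * |x^a*(x-1) + x*(x-1)^a| := this
    _ ≤ δ/2 + c*2 := by linarith
    _ = δ := by rw [hcdef]; ring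

lemma cwa_of_closed {s : Set ℝ} {g : ℝ → ℝ} {x : ℝ} (hs : IsClosed s)
    (h : x ∈ s → ContinuousWithinAt g s x) : ContinuousWithinAt g s x := by
  by_cases hx : x ∈ s
  · exact h hx
  · have hb : 𝓝[s] x = ⊥ := by
      rw [← Filter.not_neBot]
      intro hne
      exact hx (hs.closure_eq ▸ mem_closure_iff_nhdsWithin_neBot.mpr hne)
    rw [ContinuousWithinAt, hb]
    exact Filter.tendsto_bot



/-- 𝒫′: real polynomials with p((0,1)) ⊆ (0,1), p < 0 on (-∞,0), p > 1 on (1,∞). -/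
def memP' (p : Polynomial ℝ) : Prop :=
  (∀ x ∈ Set.Ioo (0:ℝ) 1, p.eval x ∈ Set.Ioo (0:ℝ) 1) ∧
  (∀ x : ℝ, x < 0 → p.eval x < 0) ∧
  (∀ x : ℝ, 1 < x → 1 < p.eval x)

theorem stmt_5 (A : Set ℝ) (hA : IsClosed A) (hAsub : A ⊆ Set.Icc (0:ℝ) 1)
    (ε : ℝ) (hε : 0 < ε) (f : ℝ → ℝ) (hf : ContinuousOn f A)
    (hf01 : ∀ x ∈ A, f x ∈ Set.Icc (0:ℝ) 1)
    (h0 : (0:ℝ) ∈ A → f 0 = 0) (h1 : (1:ℝ) ∈ A → f 1 = 1) :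
    ∃ p : Polynomial ℝ, memP' p ∧
      sSup ((fun x => |p.eval x - f x|) '' A) < ε := by
  classical
  set A' : Set ℝ := {(0:ℝ)} ∪ ({(1:ℝ)} ∪ A) with hA'def
  have hA' : IsClosed A' := (isClosed_singleton.union (isClosed_singleton.union hA))
  have h0A' : (0:ℝ) ∈ A' := by simp [hA'def]
  have h1A' : (1:ℝ) ∈ A' := by simp [hA'def]
  have hAA' : A ⊆ A' := fun x hx => by simp [hA'def, hx]
  set f' : ℝ → ℝ := fun x => if x ∈ A then f x else if x = 0 then 0 else 1 with hf'def
  have hf'A : ∀ x ∈ A, f' x = f x := fun x hx => if_pos hx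
  have hf'0 : f' 0 = 0 := by
    by_cases h : (0:ℝ) ∈ A
    · simp only [hf'def, if_pos h]; exact h0 h
    · simp only [hf'def]; rw [if_neg h]; norm_num
  have hf'1 : f' 1 = 1 := by
    by_cases h : (1:ℝ) ∈ A
    · simp only [hf'def, if_pos h]; exact h1 h
    · simp only [hf'def]; rw [if_neg h]; norm_num
  have hcont : ContinuousOn f' A' := by
    intro x hx
    apply ContinuousWithinAt.union
    · apply cwa_of_closed isClosed_singleton
      rintro rfl
      exact continuousWithinAt_singleton
    · apply ContinuousWithinAt.union
      · apply cwa_of_closed isClosed_singleton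
        rintro rfl
        exact continuousWithinAt_singleton
      · apply cwa_of_closed hA
        intro hxA
        exact ((hf x hxA).congr (fun y hy => hf'A y hy) (hf'A x hxA))
  obtain ⟨G, hG⟩ := ContinuousMap.exists_restrict_eq hA' ⟨A'.restrict f', hcont.restrict⟩
  have hGx : ∀ x (hx : x ∈ A'), G x = f' x := by
    intro x hx
    have := congrFun (congrArg DFunLike.coe hG) ⟨x, hx⟩
    exact this
  set g₁ : ℝ → ℝ := fun x => max 0 (min 1 (G x)) with hg₁def
  have hg₁cont : Continuous g₁ := continuous_const.max (continuous_const.min G.continuous)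
  have hg₁mem : ∀ x, 0 ≤ g₁ x ∧ g₁ x ≤ 1 := by
    intro x
    exact ⟨le_max_left _ _, max_le zero_le_one (min_le_left _ _)⟩
  have hg₁0 : g₁ 0 = 0 := by
    have hG0 : G 0 = 0 := by rw [hGx 0 h0A', hf'0]
    simp [hg₁def, hG0]
  have hg₁1 : g₁ 1 = 1 := by
    have hG1 : G 1 = 1 := by rw [hGx 1 h1A', hf'1]
    simp [hg₁def, hG1]
  have hg₁A : ∀ x ∈ A, g₁ x = f x := by
    intro x hx
    have hGfx : G x = f x := by rw [hGx x (hAA' hx), hf'A x hx]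
    obtain ⟨hfx0, hfx1⟩ := hf01 x hx
    simp only [hg₁def, hGfx]
    rw [min_eq_right hfx1, max_eq_right hfx0]
  set δ : ℝ := min (ε/4) (1/2) with hδdef
  have hδ0 : 0 < δ := lt_min (by linarith) (by norm_num)
  have hδ1 : δ ≤ 1/2 := min_le_right _ _
  have hδε : 4*δ ≤ ε := by
    have := min_le_left (ε/4) (1/2); simp only [hδdef]; linarith
  set hh : ℝ → ℝ := fun x => (1-δ)*g₁ x + δ*x with hhdef
  have hhcont : Continuous hh :=
    (continuous_const.mul hg₁cont).add (continuous_const.mul continuous_id)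
  have H0 : hh 0 = 0 := by simp [hhdef, hg₁0]
  have H1 : hh 1 = 1 := by simp [hhdef, hg₁1]
  have H3 : ∀ t, 0 ≤ t → t ≤ 1 → δ*t ≤ hh t := by
    intro t ht0 ht1
    have := (hg₁mem t).1
    simp only [hhdef]
    nlinarith
  have H4 : ∀ t, 0 ≤ t → t ≤ 1 → hh t ≤ 1 - δ*(1-t) := by
    intro t ht0 ht1
    have := (hg₁mem t).2
    simp only [hhdef]
    nlinarith
  obtain ⟨p, hpmem, hpapprox⟩ := core hh hhcont hδ0 hδ1 H0 H1 H3 H4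
  refine ⟨p, ⟨hpmem.1, hpmem.2.1, hpmem.2.2⟩, ?_⟩
  have hbound : ∀ y ∈ (fun x => |p.eval x - f x|) '' A, y ≤ ε/2 := by
    rintro y ⟨x, hxA, rfl⟩
    obtain ⟨hx0, hx1⟩ := hAsub hxA
    have e1 := hpapprox x hx0 hx1
    have e2 : |hh x - f x| ≤ δ := by
      obtain ⟨hfx0, hfx1⟩ := hf01 x hxA
      have hgf := hg₁A x hxA
      have estep : hh x - f x = δ*(x - f x) := by
        simp only [hhdef, hgf]; ring
      rw [estep, abs_mul, abs_of_pos hδ0]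
      have : |x - f x| ≤ 1 := abs_le.mpr ⟨by linarith, by linarith⟩
      nlinarith
    calc |p.eval x - f x| ≤ |p.eval x - hh x| + |hh x - f x| := abs_sub_le _ _ _
    _ ≤ δ + δ := add_le_add e1 e2
    _ ≤ ε/2 := by linarith
  have := Real.sSup_le hbound (by linarith)
  linarith
end

section
/- Let A be a closed subset of [0,1], let ε > 0, and let f : A → ℝ be continuous with 0 ≤ f(x) ≤ 1 for all x ∈ A, f(0) = 0 if 0 ∈ A, and f(1) = 0 if 1 ∈ A. Then there exists a polynomial p ∈ 𝒬′ with sup_{x∈A} |p(x) − f(x)| < ε. -/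
set_option maxHeartbeats 1000000


open Polynomial

/-- 𝒬′: real polynomials with p((0,1)) ⊆ (0,1), p < 0 on (-∞,0), p < 0 on (1,∞). -/
def memQ' (p : Polynomial ℝ) : Prop :=
  (∀ x ∈ Set.Ioo (0:ℝ) 1, p.eval x ∈ Set.Ioo (0:ℝ) 1) ∧
  (∀ x : ℝ, x < 0 → p.eval x < 0) ∧
  (∀ x : ℝ, 1 < x → p.eval x < 0)

noncomputable def Ssum (n : ℕ) (c : ℕ → ℝ) (x : ℝ) : ℝ :=
  ∑ k ∈ Finset.range (n+1), c k * ((n.choose k : ℝ) * x^k * (1-x)^(n-k))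

lemma Ssum_nonneg (n : ℕ) (c : ℕ → ℝ) (hc : ∀ k, 0 ≤ c k) {x : ℝ}
    (hx : x ∈ Set.Icc (0:ℝ) 1) : 0 ≤ Ssum n c x := by
  apply Finset.sum_nonneg
  intro k _
  have h1 : (0:ℝ) ≤ x := hx.1
  have h2 : (0:ℝ) ≤ 1 - x := by linarith [hx.2]
  exact mul_nonneg (hc k) (by positivity)

lemma Ssum_le_one (n : ℕ) (c : ℕ → ℝ) (hc : ∀ k, c k ≤ 1) (hc0 : ∀ k, 0 ≤ c k) {x : ℝ}
    (hx : x ∈ Set.Icc (0:ℝ) 1) : Ssum n c x ≤ 1 := by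
  have h1 : (0:ℝ) ≤ x := hx.1
  have h2 : (0:ℝ) ≤ 1 - x := by linarith [hx.2]
  have hsum : (∑ k ∈ Finset.range (n+1), x^k * (1-x)^(n-k) * (n.choose k : ℝ)) = 1 := by
    rw [← add_pow]; simp
  calc Ssum n c x ≤ ∑ k ∈ Finset.range (n+1), x^k * (1-x)^(n-k) * (n.choose k : ℝ) := by
        apply Finset.sum_le_sum
        intro k _
        have : c k * ((n.choose k : ℝ) * x^k * (1-x)^(n-k)) ≤ 1 * ((n.choose k : ℝ) * x^k * (1-x)^(n-k)) := by
          apply mul_le_mul_of_nonneg_right (hc k)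
          positivity
        nlinarith [this]
    _ = 1 := hsum

lemma Ssum_near (n : ℕ) (c : ℕ → ℝ) (hc0 : c 0 = 0) (hc : ∀ k, 0 ≤ c k) (hc1 : ∀ k, c k ≤ 1)
    {t : ℝ} (ht : 0 < t) (ht1 : t ≤ 1) :
    Ssum n c (-t) ≤ 4^n * t^2 := by
  have key : ∀ k ∈ Finset.range (n+1),
      c k * ((n.choose k : ℝ) * (-t)^k * (1-(-t))^(n-k)) ≤ (n.choose k : ℝ) * (2^n * t^2) := by
    intro k hk
    have h1t : (0:ℝ) < 1 + t := by linarith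
    have e : (1:ℝ) - -t = 1 + t := by ring
    rw [e]
    match k with
    | 0 => simp [hc0]; positivity
    | 1 =>
      have hle : c 1 * ((n.choose 1 : ℝ) * (-t)^1 * (1+t)^(n-1)) ≤ 0 := by
        apply mul_nonpos_of_nonneg_of_nonpos (hc 1)
        apply mul_nonpos_of_nonpos_of_nonneg
        · rw [pow_one]
          exact mul_nonpos_of_nonneg_of_nonpos (Nat.cast_nonneg _) (by linarith)
        · positivity
      refine hle.trans (by positivity)
    | (m+2) =>
      set k := m + 2 with hkdef
      have hb2 : (1+t)^(n-k) ≤ 2^n := by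
        calc (1+t)^(n-k) ≤ 2^(n-k) := pow_le_pow_left₀ (by linarith) (by linarith) _
          _ ≤ 2^n := pow_le_pow_right₀ one_le_two (Nat.sub_le _ _)
      have htk : t^k ≤ t^2 := pow_le_pow_of_le_one ht.le ht1 (by omega)
      calc c k * ((n.choose k : ℝ) * (-t)^k * (1+t)^(n-k))
          ≤ |c k * ((n.choose k : ℝ) * (-t)^k * (1+t)^(n-k))| := le_abs_self _
        _ = c k * ((n.choose k : ℝ) * t^k * (1+t)^(n-k)) := by
            rw [abs_mul, abs_mul, abs_mul, abs_of_nonneg (hc k),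
              abs_of_nonneg (Nat.cast_nonneg _), abs_pow, abs_neg, abs_of_nonneg ht.le,
              abs_of_nonneg (pow_nonneg h1t.le _)]
        _ ≤ 1 * ((n.choose k : ℝ) * t^2 * 2^n) := by
            apply mul_le_mul (hc1 k) ?_ ?_ one_pos.le
            · apply mul_le_mul ?_ hb2 (by positivity) (by positivity)
              exact mul_le_mul_of_nonneg_left htk (Nat.cast_nonneg _)
            · positivity
        _ = (n.choose k : ℝ) * (2^n * t^2) := by ring
  calc Ssum n c (-t) ≤ ∑ k ∈ Finset.range (n+1), (n.choose k : ℝ) * (2^n * t^2) :=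
        Finset.sum_le_sum key
    _ = (∑ k ∈ Finset.range (n+1), (n.choose k : ℝ)) * (2^n * t^2) := by rw [Finset.sum_mul]
    _ = 4^n * t^2 := by
        have h4 : (∑ k ∈ Finset.range (n+1), (n.choose k : ℝ)) = 2^n := by
          rw [← Nat.cast_sum, Nat.sum_range_choose]; push_cast; ring
        rw [h4, show (4:ℝ)^n = 2^n * 2^n by rw [← pow_add, ← two_mul, pow_mul]; norm_num]
        ring

lemma Ssum_crude (n : ℕ) (c : ℕ → ℝ) (hc : ∀ k, 0 ≤ c k) (hc1 : ∀ k, c k ≤ 1)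
    {x u : ℝ} (h1 : |x| ≤ u) (h2 : |1-x| ≤ u) :
    Ssum n c x ≤ 2^n * u^n := by
  have hu0 : 0 ≤ u := le_trans (abs_nonneg _) h1
  have key : ∀ k ∈ Finset.range (n+1),
      c k * ((n.choose k : ℝ) * x^k * (1-x)^(n-k)) ≤ (n.choose k : ℝ) * u^n := by
    intro k hk
    have hkn : k ≤ n := by simp at hk; omega
    calc c k * ((n.choose k : ℝ) * x^k * (1-x)^(n-k))
        ≤ |c k * ((n.choose k : ℝ) * x^k * (1-x)^(n-k))| := le_abs_self _
      _ = c k * ((n.choose k : ℝ) * |x|^k * |1-x|^(n-k)) := by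
          rw [abs_mul, abs_mul, abs_mul, abs_of_nonneg (hc k), abs_of_nonneg (Nat.cast_nonneg _),
            abs_pow, abs_pow]
      _ ≤ 1 * ((n.choose k : ℝ) * u^k * u^(n-k)) := by
          apply mul_le_mul (hc1 k) ?_ ?_ one_pos.le
          · apply mul_le_mul ?_ (pow_le_pow_left₀ (abs_nonneg _) h2 _) (by positivity) (by positivity)
            exact mul_le_mul_of_nonneg_left (pow_le_pow_left₀ (abs_nonneg _) h1 _) (Nat.cast_nonneg _)
          · positivity
      _ = (n.choose k : ℝ) * u^n := by
          rw [one_mul, mul_assoc, ← pow_add]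
          congr 2
          omega
  calc Ssum n c x ≤ ∑ k ∈ Finset.range (n+1), (n.choose k : ℝ) * u^n := Finset.sum_le_sum key
    _ = 2^n * u^n := by
        rw [← Finset.sum_mul, ← Nat.cast_sum, Nat.sum_range_choose]
        push_cast; ring

lemma Ssum_reflect (n : ℕ) (c : ℕ → ℝ) (x : ℝ) :
    Ssum n c x = Ssum n (fun k => c (n - k)) (1 - x) := by
  unfold Ssum
  rw [← Finset.sum_range_reflect]
  apply Finset.sum_congr rfl
  intro k hk
  have hkn : k ≤ n := by simp at hk; omega
  have h1 : n + 1 - 1 - k = n - k := by omega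
  have h2 : n - (n - k) = k := by omega
  rw [h1, Nat.choose_symm hkn, h2]
  ring

lemma exists_h (A : Set ℝ) (hA : IsClosed A) (f : ℝ → ℝ) (hf : ContinuousOn f A)
    (hf01 : ∀ x ∈ A, f x ∈ Set.Icc (0:ℝ) 1)
    (h0 : (0:ℝ) ∈ A → f 0 = 0) (h1 : (1:ℝ) ∈ A → f 1 = 0) :
    ∃ h : ℝ → ℝ, Continuous h ∧ (∀ x ∈ A, h x = f x) ∧
      (∀ x, 0 ≤ h x ∧ h x ≤ 1) ∧ h 0 = 0 ∧ h 1 = 0 := by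
  obtain ⟨g, hg⟩ := ContinuousMap.exists_restrict_eq (Y := ℝ) hA ⟨A.restrict f, hf.restrict⟩
  have hgA : ∀ x ∈ A, g x = f x := by
    intro x hx
    have := congrFun (congrArg DFunLike.coe hg) ⟨x, hx⟩
    exact this
  set g1 : ℝ → ℝ := fun x => max 0 (min 1 (g x)) with hg1def
  have hg1cont : Continuous g1 := continuous_const.max (continuous_const.min g.continuous)
  have hg1A : ∀ x ∈ A, g1 x = f x := by
    intro x hx
    obtain ⟨hx0, hx1⟩ := hf01 x hx
    simp only [hg1def, hgA x hx]
    rw [min_eq_right hx1, max_eq_right hx0]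
  have hg101 : ∀ x, 0 ≤ g1 x ∧ g1 x ≤ 1 := by
    intro x
    constructor
    · exact le_max_left _ _
    · exact max_le (by norm_num) (min_le_left _ _)
  have hBclosed : IsClosed (({0,1} : Set ℝ) \ A) := by
    apply Set.Finite.isClosed
    exact ((Set.finite_singleton (1:ℝ)).insert 0).subset Set.diff_subset
  obtain ⟨φ, hφ0, hφ1, hφ01⟩ := exists_continuous_zero_one_of_isClosed hBclosed hA
    Set.disjoint_sdiff_left
  refine ⟨fun x => g1 x * φ x, hg1cont.mul φ.continuous, ?_, ?_, ?_, ?_⟩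
  · intro x hx
    show g1 x * φ x = f x
    rw [hφ1 hx, hg1A x hx]
    simp
  · intro x
    obtain ⟨ha, hb⟩ := hφ01 x
    obtain ⟨hc, hd⟩ := hg101 x
    exact ⟨mul_nonneg hc ha, mul_le_one₀ hd ha hb⟩
  · show g1 0 * φ 0 = 0
    by_cases hx : (0:ℝ) ∈ A
    · rw [hg1A 0 hx, h0 hx, zero_mul]
    · rw [hφ0 (by simp [hx]), Pi.zero_apply, mul_zero]
  · show g1 1 * φ 1 = 0
    by_cases hx : (1:ℝ) ∈ A
    · rw [hg1A 1 hx, h1 hx, zero_mul]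
    · rw [hφ0 (by simp [hx]), Pi.zero_apply, mul_zero]

lemma exists_bern (h : ℝ → ℝ) (hc : Continuous h) (θ : ℝ) (hθ : 0 < θ) :
    ∃ n : ℕ, 1 ≤ n ∧ ∀ x ∈ Set.Icc (0:ℝ) 1,
      |Ssum n (fun k => h ((k:ℝ)/(n:ℝ))) x - h x| ≤ θ := by
  set hI : C(unitInterval, ℝ) := (ContinuousMap.mk h hc).restrict unitInterval with hIdef
  have key : ∀ (n : ℕ) (x : unitInterval),
      bernsteinApproximation n hI x = Ssum n (fun k => h ((k:ℝ)/(n:ℝ))) (x:ℝ) := by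
    intro n x
    rw [bernsteinApproximation.apply]
    rw [show (∑ k : Fin (n+1), bernstein n k x • hI (bernstein.z k))
        = ∑ k : Fin (n+1), (fun j : ℕ => h ((j:ℝ)/(n:ℝ)) *
            ((n.choose j : ℝ) * (x:ℝ)^j * (1-(x:ℝ))^(n-j))) (k:ℕ) from
      Finset.sum_congr rfl fun k _ => by rw [bernstein_apply, smul_eq_mul]; exact mul_comm _ _]
    exact Fin.sum_univ_eq_sum_range (fun j : ℕ => h ((j:ℝ)/(n:ℝ)) *
      ((n.choose j : ℝ) * (x:ℝ)^j * (1-(x:ℝ))^(n-j))) (n+1)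
  have htend := bernsteinApproximation_uniform hI
  rw [Metric.tendsto_atTop] at htend
  obtain ⟨N, hN⟩ := htend θ hθ
  refine ⟨max N 1, le_max_right _ _, ?_⟩
  intro x hx
  have hd := hN (max N 1) (le_max_left _ _)
  have hpt : dist (bernsteinApproximation (max N 1) hI ⟨x, hx⟩) (hI ⟨x, hx⟩)
      ≤ dist (bernsteinApproximation (max N 1) hI) hI := ContinuousMap.dist_apply_le_dist _
  rw [key] at hpt
  have : hI ⟨x, hx⟩ = h x := rfl
  rw [this] at hpt
  rw [Real.dist_eq] at hpt
  calc |Ssum (max N 1) (fun k => h ((k:ℝ)/((max N 1:ℕ):ℝ))) x - h x| ≤ _ := hpt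
    _ ≤ θ := le_of_lt hd

lemma outside_neg (n m r0 : ℕ) (hn : 1 ≤ n) (hm : m = r0 + n) (θ t S : ℝ)
    (hθ : 0 < θ) (hθ18 : θ ≤ 1/8) (ht : 0 < t)
    (hnear : t ≤ 1 → S ≤ 4^n * t^2)
    (hfar : S ≤ 2^n * (1+2*t)^n)
    (hr0 : max 2 (2^(n+1)/θ) < (1 + 2*(θ/4^n))^r0) :
    (1-θ) * ((1-θ)*S + θ*(-(t*(1+t)))) + θ*(1 - (1+2*t)^(2*m)) < 0 := by
  have h4n : (1:ℝ) ≤ 4^n := one_le_pow₀ (by norm_num)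
  have h4npos : (0:ℝ) < 4^n := by positivity
  have ht0pos : 0 < θ/4^n := by positivity
  have ht0θ : θ/4^n ≤ θ := div_le_self hθ.le h4n
  have hZ1 : 1 < (1+2*t)^(2*m) := by
    apply one_lt_pow₀ (by linarith)
    omega
  by_cases hcase : t < θ/4^n
  · have ht1 : t ≤ 1 := by linarith
    have hS := hnear ht1
    have h2 : 4^n * t < θ := by
      have := (lt_div_iff₀ h4npos).mp hcase
      linarith
    have inner : (1-θ)*S + θ*(-(t*(1+t))) < 0 := by
      have h1 : (1-θ)*S ≤ (1-θ)*(4^n*t^2) := mul_le_mul_of_nonneg_left hS (by linarith)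
      nlinarith [mul_lt_mul_of_pos_right h2 ht, mul_nonneg hθ.le (mul_nonneg h4npos.le (sq_nonneg t)), mul_pos hθ (mul_pos ht ht)]
    have hA : (1-θ)*((1-θ)*S + θ*(-(t*(1+t)))) < 0 :=
      mul_neg_of_pos_of_neg (by linarith) inner
    have hB : θ*(1 - (1+2*t)^(2*m)) < 0 :=
      mul_neg_of_pos_of_neg hθ (by linarith)
    linarith
  · push_neg at hcase
    set u : ℝ := 1 + 2*t with hudef
    have hu1 : 1 < u := by simp only [hudef]; linarith
    have hu0 : 1 + 2*(θ/4^n) ≤ u := by simp only [hudef]; linarith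
    have ha : max 2 (2^(n+1)/θ) < u^r0 :=
      lt_of_lt_of_le hr0 (pow_le_pow_left₀ (by linarith) hu0 r0)
    have ha2 : (2:ℝ) < u^r0 := lt_of_le_of_lt (le_max_left _ _) ha
    have haθ : 2^(n+1) < θ * u^r0 := by
      have h' : 2^(n+1)/θ < u^r0 := lt_of_le_of_lt (le_max_right _ _) ha
      rw [div_lt_iff₀ hθ] at h'
      linarith
    have hb1 : (1:ℝ) ≤ u^n := one_le_pow₀ hu1.le
    have hupos : (0:ℝ) < u := by linarith
    have hunpos : (0:ℝ) < u^n := by positivity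
    have h2m : u^(2*m) = u^r0 * (u^r0 * (u^n * u^n)) := by
      rw [← pow_add, ← pow_add, ← pow_add]
      congr 1
      omega
    have hP : (1:ℝ) ≤ 2^n * u^n := by
      have : (1:ℝ) ≤ 2^n := one_le_pow₀ (by norm_num)
      nlinarith
    have hterm1 : (1-θ)*((1-θ)*S + θ*(-(t*(1+t)))) ≤ 2^n * u^n := by
      have hfS : (1-θ)*S ≤ (1-θ)*(2^n*u^n) := mul_le_mul_of_nonneg_left hfar (by linarith)
      have hinner : (1-θ)*S + θ*(-(t*(1+t))) ≤ (1-θ)*(2^n*u^n) := by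
        nlinarith [mul_pos hθ (mul_pos ht (show (0:ℝ) < 1+t by linarith))]
      calc (1-θ)*((1-θ)*S + θ*(-(t*(1+t)))) ≤ (1-θ)*((1-θ)*(2^n*u^n)) :=
            mul_le_mul_of_nonneg_left hinner (by linarith)
        _ ≤ 2^n * u^n := by
            have e : (1-θ)*((1-θ)*(2^n*u^n)) = 2^n*u^n - θ*(2-θ)*(2^n*u^n) := by ring
            have hnn : 0 ≤ θ*(2-θ)*(2^n*u^n) :=
              mul_nonneg (mul_nonneg hθ.le (by linarith)) (by linarith)
            linarith
    have hK : 2*(u^n) ≤ u^r0 * (u^n*u^n) := by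
      have h1 : u^n ≤ u^n * u^n := le_mul_of_one_le_left hunpos.le hb1
      calc 2*(u^n) ≤ u^r0 * u^n := mul_le_mul_of_nonneg_right ha2.le hunpos.le
        _ ≤ u^r0 * (u^n * u^n) := mul_le_mul_of_nonneg_left h1 (by positivity)
    have step : 2^(n+1) * (2*(u^n)) < (θ*u^r0) * (u^r0*(u^n*u^n)) :=
      mul_lt_mul haθ hK (by positivity) (by positivity)
    have hfinal : 2^n*u^n + θ*(1 - u^(2*m)) < 0 := by
      have e1 : θ * u^(2*m) = (θ*u^r0) * (u^r0*(u^n*u^n)) := by rw [h2m]; ring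
      have e2 : (2:ℝ)^(n+1) * (2*(u^n)) = 4 * (2^n * u^n) := by rw [pow_succ]; ring
      linarith [step, hP, hθ18, hθ]
    linarith

theorem stmt_7 (A : Set ℝ) (hA : IsClosed A) (hAsub : A ⊆ Set.Icc (0:ℝ) 1)
    (ε : ℝ) (hε : 0 < ε) (f : ℝ → ℝ) (hf : ContinuousOn f A)
    (hf01 : ∀ x ∈ A, f x ∈ Set.Icc (0:ℝ) 1)
    (h0 : (0:ℝ) ∈ A → f 0 = 0) (h1 : (1:ℝ) ∈ A → f 1 = 0) :
    ∃ p : Polynomial ℝ, memQ' p ∧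
      sSup ((fun x => |p.eval x - f x|) '' A) < ε := by
  set θ : ℝ := min ε 1 / 8 with hθdef
  have hθ : 0 < θ := div_pos (lt_min hε one_pos) (by norm_num)
  have hθ18 : θ ≤ 1/8 := by
    have := min_le_right ε 1
    rw [hθdef]; linarith
  have hθε : 8*θ ≤ ε := by
    have := min_le_left ε 1
    rw [hθdef]; linarith
  have hθ1 : θ < 1 := by linarith
  obtain ⟨h, hhcont, hhA, hh01, hh0, hh1⟩ := exists_h A hA f hf hf01 h0 h1
  obtain ⟨n, hn1, hBapprox⟩ := exists_bern h hhcont θ hθ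
  set c : ℕ → ℝ := fun k => h ((k:ℝ)/(n:ℝ)) with hcdef
  have hc0 : c 0 = 0 := by simp [hcdef, hh0]
  have hcn : c n = 0 := by
    have hne : (n:ℝ) ≠ 0 := by positivity
    simp [hcdef, div_self hne, hh1]
  have hcnn : ∀ k, 0 ≤ c k := fun k => (hh01 _).1
  have hc1 : ∀ k, c k ≤ 1 := fun k => (hh01 _).2
  have h4npos : (0:ℝ) < 4^n := by positivity
  have hu0gt : (1:ℝ) < 1 + 2*(θ/4^n) := by
    have : 0 < θ/4^n := by positivity
    linarith
  obtain ⟨r0, hr0⟩ := pow_unbounded_of_one_lt (max 2 (2^(n+1)/θ)) hu0gt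
  set m : ℕ := r0 + n with hmdef
  -- the polynomial
  set B : Polynomial ℝ := ∑ k ∈ Finset.range (n+1), Polynomial.C (c k) * bernsteinPolynomial ℝ n k
    with hBdef
  have hBeval : ∀ x : ℝ, B.eval x = Ssum n c x := by
    intro x
    rw [hBdef, Polynomial.eval_finset_sum]
    apply Finset.sum_congr rfl
    intro k _
    simp [bernsteinPolynomial, Ssum]
  set q : Polynomial ℝ := Polynomial.C ((1-θ)*(1-θ)) * B
      + Polynomial.C ((1-θ)*θ) * (Polynomial.X * (1 - Polynomial.X))
      + Polynomial.C θ * (1 - (2*Polynomial.X - 1)^(2*m)) with hqdef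
  have heval : ∀ x : ℝ, q.eval x
      = (1-θ)*((1-θ)*(Ssum n c x) + θ*(x*(1-x))) + θ*(1-(2*x-1)^(2*m)) := by
    intro x
    rw [hqdef]
    simp only [Polynomial.eval_add, Polynomial.eval_mul, Polynomial.eval_C, Polynomial.eval_X,
      Polynomial.eval_sub, Polynomial.eval_one, Polynomial.eval_pow, Polynomial.eval_ofNat,
      hBeval]
    ring
  refine ⟨q, ⟨?_, ?_, ?_⟩, ?_⟩
  · -- (0,1) → (0,1)
    intro x hx
    have hxI : x ∈ Set.Icc (0:ℝ) 1 := ⟨hx.1.le, hx.2.le⟩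
    have hS0 : 0 ≤ Ssum n c x := Ssum_nonneg n c hcnn hxI
    have hS1 : Ssum n c x ≤ 1 := Ssum_le_one n c hc1 hcnn hxI
    have hxx : 0 < x*(1-x) := mul_pos hx.1 (by linarith [hx.2])
    have hZ0 : 0 ≤ (2*x-1)^(2*m) := by rw [pow_mul]; positivity
    have hZ1 : (2*x-1)^(2*m) ≤ 1 := by
      rw [pow_mul]
      apply pow_le_one₀ (sq_nonneg _)
      nlinarith [hx.1, hx.2]
    constructor
    · rw [heval]
      have hinner : 0 < (1-θ)*(Ssum n c x) + θ*(x*(1-x)) := by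
        have := mul_nonneg (show (0:ℝ) ≤ 1-θ by linarith) hS0
        have := mul_pos hθ hxx
        linarith
      have h1 := mul_pos (show (0:ℝ) < 1-θ by linarith) hinner
      have h2 : 0 ≤ θ*(1-(2*x-1)^(2*m)) := mul_nonneg hθ.le (by linarith)
      linarith
    · rw [heval]
      have hx14 : x*(1-x) ≤ 1/4 := by nlinarith [sq_nonneg (x - 1/2)]
      have hi1 : (1-θ)*(Ssum n c x) ≤ (1-θ)*1 :=
        mul_le_mul_of_nonneg_left hS1 (by linarith)
      have hi2 : θ*(x*(1-x)) ≤ θ*(1/4) := mul_le_mul_of_nonneg_left hx14 hθ.le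
      have hi3 : (1-θ)*(Ssum n c x) + θ*(x*(1-x)) ≤ 1 - (3/4)*θ := by linarith
      have hi4 : (1-θ)*((1-θ)*(Ssum n c x) + θ*(x*(1-x))) ≤ (1-θ)*(1-(3/4)*θ) :=
        mul_le_mul_of_nonneg_left hi3 (by linarith)
      have hi5 : θ*(1-(2*x-1)^(2*m)) ≤ θ := by nlinarith [hZ0]
      nlinarith [mul_pos hθ (show (0:ℝ) < 1-θ by linarith)]
  · -- x < 0
    intro x hx
    set t : ℝ := -x with htdef
    have ht : 0 < t := by simp [htdef]; linarith
    have e1 : x*(1-x) = -(t*(1+t)) := by rw [htdef]; ring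
    have e2 : (2*x-1)^(2*m) = (1+2*t)^(2*m) := by
      rw [show 2*x-1 = -(1+2*t) by rw [htdef]; ring, Even.neg_pow (even_two_mul m)]
    rw [heval, e1, e2]
    apply outside_neg n m r0 hn1 hmdef θ t (Ssum n c x) hθ hθ18 ht
    · intro ht1
      have ex : x = -t := by rw [htdef]; ring
      rw [ex]
      exact Ssum_near n c hc0 hcnn hc1 ht ht1
    · apply Ssum_crude n c hcnn hc1
      · rw [abs_of_nonpos hx.le]; rw [htdef]; linarith
      · rw [abs_of_nonneg (by linarith : (0:ℝ) ≤ 1 - x)]; rw [htdef]; linarith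
    · exact hr0
  · -- x > 1
    intro x hx
    set t : ℝ := x - 1 with htdef
    have ht : 0 < t := by simp [htdef]; linarith
    have e1 : x*(1-x) = -(t*(1+t)) := by rw [htdef]; ring
    have e2 : (2*x-1)^(2*m) = (1+2*t)^(2*m) := by rw [show (1+2*t) = 2*x-1 by rw [htdef]; ring]
    rw [heval, e1, e2]
    apply outside_neg n m r0 hn1 hmdef θ t (Ssum n c x) hθ hθ18 ht
    · intro ht1
      have ex : 1 - x = -t := by rw [htdef]; ring
      rw [Ssum_reflect n c x, ex]
      apply Ssum_near n (fun k => c (n-k)) (by simpa using hcn)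
        (fun k => hcnn _) (fun k => hc1 _) ht ht1
    · apply Ssum_crude n c hcnn hc1
      · rw [abs_of_nonneg (by linarith : (0:ℝ) ≤ x)]; rw [htdef]; linarith
      · rw [abs_of_nonpos (by linarith : 1 - x ≤ (0:ℝ))]; rw [htdef]; linarith
    · exact hr0
  · -- sup bound
    have hbound : ∀ y ∈ (fun x => |q.eval x - f x|) '' A, y ≤ 3*θ := by
      rintro y ⟨x, hxA, rfl⟩
      have hxI : x ∈ Set.Icc (0:ℝ) 1 := hAsub hxA
      have hfx : f x = h x := (hhA x hxA).symm
      have hd1 : |Ssum n c x - h x| ≤ θ := hBapprox x hxI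
      have hZ0 : 0 ≤ (2*x-1)^(2*m) := by rw [pow_mul]; positivity
      have hZ1 : (2*x-1)^(2*m) ≤ 1 := by
        rw [pow_mul]
        apply pow_le_one₀ (sq_nonneg _)
        nlinarith [hxI.1, hxI.2]
      have hxx0 : 0 ≤ x*(1-x) := mul_nonneg hxI.1 (by linarith [hxI.2])
      have hxx1 : x*(1-x) ≤ 1/4 := by nlinarith [sq_nonneg (x - 1/2)]
      have hh0' := (hh01 x).1
      have hh1' := (hh01 x).2
      have habs : ∀ (a d bnd : ℝ), 0 ≤ a → a ≤ 1 → |d| ≤ bnd → |a*d| ≤ bnd := by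
        intro a d bnd ha ha1 hd
        rw [abs_mul, abs_of_nonneg ha]
        calc a*|d| ≤ 1*|d| := mul_le_mul_of_nonneg_right ha1 (abs_nonneg _)
          _ = |d| := one_mul _
          _ ≤ bnd := hd
      have hdecomp : q.eval x - f x
          = (1-θ)*(1-θ)*(Ssum n c x - h x)
            + (1-θ)*θ*((x*(1-x)) - h x)
            + θ*((1-(2*x-1)^(2*m)) - h x) := by
        rw [heval x, hfx]; ring
      have b1 : |(1-θ)*(1-θ)*(Ssum n c x - h x)| ≤ θ := by
        apply habs _ _ _ (by nlinarith) (by nlinarith) hd1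
      have habs2 : ∀ (a d : ℝ), 0 ≤ a → |d| ≤ 1 → |a*d| ≤ a := by
        intro a d ha hd
        rw [abs_mul, abs_of_nonneg ha]
        calc a*|d| ≤ a*1 := mul_le_mul_of_nonneg_left hd ha
          _ = a := mul_one _
      have b2 : |(1-θ)*θ*((x*(1-x)) - h x)| ≤ θ := by
        have := habs2 ((1-θ)*θ) ((x*(1-x)) - h x)
          (mul_nonneg (by linarith) hθ.le)
          (abs_le.mpr ⟨by nlinarith, by nlinarith⟩)
        nlinarith [this, mul_pos hθ (show (0:ℝ) < θ by exact hθ)]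
      have b3 : |θ*((1-(2*x-1)^(2*m)) - h x)| ≤ θ := by
        apply habs2 _ _ hθ.le
        rw [abs_le]
        constructor <;> nlinarith
      show |q.eval x - f x| ≤ 3*θ
      rw [hdecomp]
      calc |(1-θ)*(1-θ)*(Ssum n c x - h x) + (1-θ)*θ*((x*(1-x)) - h x)
            + θ*((1-(2*x-1)^(2*m)) - h x)|
          ≤ |(1-θ)*(1-θ)*(Ssum n c x - h x) + (1-θ)*θ*((x*(1-x)) - h x)|
            + |θ*((1-(2*x-1)^(2*m)) - h x)| := abs_add_le _ _
        _ ≤ |(1-θ)*(1-θ)*(Ssum n c x - h x)| + |(1-θ)*θ*((x*(1-x)) - h x)|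
            + |θ*((1-(2*x-1)^(2*m)) - h x)| := by linarith [abs_add_le ((1-θ)*(1-θ)*(Ssum n c x - h x)) ((1-θ)*θ*((x*(1-x)) - h x))]
        _ ≤ 3*θ := by linarith
    have hsup : sSup ((fun x => |q.eval x - f x|) '' A) ≤ 3*θ :=
      Real.sSup_le hbound (by linarith)
    linarith
end

section
/- Let h be a real univariate polynomial. Then: (a) there exist positive integers α, β with β even such that r_{α,β}(x) + h(x) > 0 for all x ≥ 2; (b) there exist positive integers α, β with β odd such that r_{α,β}(x) + h(x) < 0 for all x ≥ 2. -/
open Polynomial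

/-- r_{α,β}(x) = x^(2α+1) (1-x)^β. -/
def rab (α β : ℕ) (x : ℝ) : ℝ := x ^ (2*α+1) * (1-x) ^ β

lemma poly_bound (h : Polynomial ℝ) : ∃ n : ℕ, ∀ x : ℝ, 2 ≤ x → |h.eval x| < x ^ n := by
  set d := h.natDegree with hd
  set C : ℝ := ∑ i ∈ Finset.range (d+1), |h.coeff i| with hC
  obtain ⟨m, hm⟩ : ∃ m : ℕ, C < 2 ^ m := pow_unbounded_of_one_lt C (by norm_num)
  refine ⟨m + d, fun x hx => ?_⟩
  have hx1 : (1:ℝ) ≤ x := by linarith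
  have hx0 : (0:ℝ) < x := by linarith
  have h1 : |h.eval x| ≤ C * x ^ d := by
    rw [Polynomial.eval_eq_sum_range, hC, Finset.sum_mul]
    refine (Finset.abs_sum_le_sum_abs _ _).trans ?_
    apply Finset.sum_le_sum
    intro i hi
    rw [abs_mul, abs_pow, abs_of_pos hx0]
    exact mul_le_mul_of_nonneg_left
      (pow_le_pow_right₀ hx1 (by simpa using Finset.mem_range_succ_iff.mp hi)) (abs_nonneg _)
  have h2 : C * x ^ d < 2 ^ m * x ^ d :=
    mul_lt_mul_of_pos_right hm (pow_pos hx0 d)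
  have h3 : (2:ℝ) ^ m * x ^ d ≤ x ^ m * x ^ d :=
    mul_le_mul_of_nonneg_right (pow_le_pow_left₀ (by norm_num) hx m) (pow_pos hx0 d).le
  calc |h.eval x| ≤ C * x ^ d := h1
    _ < 2 ^ m * x ^ d := h2
    _ ≤ x ^ m * x ^ d := h3
    _ = x ^ (m + d) := (pow_add x m d).symm

theorem stmt_9 (h : Polynomial ℝ) :
    -- (a)
    (∃ α β : ℕ, 0 < α ∧ 0 < β ∧ Even β ∧
      ∀ x : ℝ, 2 ≤ x → 0 < rab α β x + h.eval x) ∧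
    -- (b)
    (∃ α β : ℕ, 0 < α ∧ 0 < β ∧ Odd β ∧
      ∀ x : ℝ, 2 ≤ x → rab α β x + h.eval x < 0) := by
  obtain ⟨n, hn⟩ := poly_bound h
  constructor
  · refine ⟨n + 1, 2, by omega, by norm_num, even_two, fun x hx => ?_⟩
    have hx1 : (1:ℝ) ≤ x := by linarith
    have hx0 : (0:ℝ) < x := by linarith
    have habs := hn x hx
    have h2 : x ^ n ≤ x ^ (2*(n+1)+1) := pow_le_pow_right₀ hx1 (by omega)
    have h3 : (1:ℝ) ≤ (1-x)^2 := by nlinarith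
    have h4 : x ^ (2*(n+1)+1) * 1 ≤ x ^ (2*(n+1)+1) * (1-x)^2 :=
      mul_le_mul_of_nonneg_left h3 (pow_pos hx0 _).le
    have h5 := neg_abs_le (h.eval x)
    unfold rab
    nlinarith
  · refine ⟨n + 1, 3, by omega, by norm_num, ⟨1, rfl⟩, fun x hx => ?_⟩
    have hx1 : (1:ℝ) ≤ x := by linarith
    have hx0 : (0:ℝ) < x := by linarith
    have habs := hn x hx
    have h2 : x ^ n ≤ x ^ (2*(n+1)+1) := pow_le_pow_right₀ hx1 (by omega)
    have h3' : (1:ℝ) ≤ (x-1)^3 := one_le_pow₀ (by linarith)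
    have h3'' : (1-x)^3 = -((x-1)^3) := by ring
    have h3 : (1-x)^3 ≤ -1 := by linarith
    have h4 : x ^ (2*(n+1)+1) * (1-x)^3 ≤ x ^ (2*(n+1)+1) * (-1) :=
      mul_le_mul_of_nonneg_left h3 (pow_pos hx0 _).le
    have h5 := le_abs_self (h.eval x)
    unfold rab
    nlinarith
end

section
/- Let h be a real univariate polynomial. Then there exist positive integers α, β such that r_{α,β}(x) + h(x) < 0 for all x ≤ −1. -/
open Polynomial

lemma eval_abs_bound (h : Polynomial ℝ) (x : ℝ) (hx : 1 ≤ |x|) :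
    |h.eval x| ≤ (∑ i ∈ Finset.range (h.natDegree + 1), |h.coeff i|) * |x| ^ h.natDegree := by
  rw [Polynomial.eval_eq_sum_range, Finset.sum_mul]
  refine (Finset.abs_sum_le_sum_abs _ _).trans (Finset.sum_le_sum fun i hi => ?_)
  rw [abs_mul, abs_pow]
  exact mul_le_mul_of_nonneg_left
    (pow_le_pow_right₀ hx (Nat.lt_succ_iff.mp (Finset.mem_range.mp hi)))
    (abs_nonneg _)

theorem stmt_10 (h : Polynomial ℝ) :
    ∃ α β : ℕ, 0 < α ∧ 0 < β ∧
      ∀ x : ℝ, x ≤ -1 → rab α β x + h.eval x < 0 := by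
  set d := h.natDegree with hd
  set C := ∑ i ∈ Finset.range (d + 1), |h.coeff i| with hC
  obtain ⟨k, hk⟩ := pow_unbounded_of_one_lt C (by norm_num : (1:ℝ) < 2)
  refine ⟨1, d + k + 1, one_pos, Nat.succ_pos _, fun x hx => ?_⟩
  have hxabs : 1 ≤ |x| := by rw [abs_of_nonpos (by linarith)]; linarith
  have hb := eval_abs_bound h x hxabs
  rw [abs_of_nonpos (by linarith : x ≤ 0)] at hb
  have heval : h.eval x ≤ C * (-x) ^ d := (le_abs_self _).trans hb
  -- bound on rab
  have hx3 : x ^ (2*1+1) ≤ -1 := by norm_num; nlinarith [sq_nonneg (x+1), sq_nonneg x]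
  have h1x : (2:ℝ) ≤ 1 - x := by linarith
  have hnx : (0:ℝ) ≤ -x := by linarith
  have hpow : 2 ^ (k+1) * (-x) ^ d ≤ (1 - x) ^ (d + k + 1) := by
    have : (1 - x) ^ (d + k + 1) = (1-x) ^ (k+1) * (1-x) ^ d := by ring
    rw [this]
    have h1 : (2:ℝ) ^ (k+1) ≤ (1-x) ^ (k+1) := pow_le_pow_left₀ (by norm_num) h1x _
    have h2 : (-x) ^ d ≤ (1-x) ^ d := pow_le_pow_left₀ hnx (by linarith) _
    exact mul_le_mul h1 h2 (pow_nonneg hnx _) (pow_nonneg (by linarith) _)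
  have hrab : rab 1 (d + k + 1) x ≤ -(2 ^ (k+1) * (-x) ^ d) := by
    unfold rab
    calc x ^ (2*1+1) * (1-x) ^ (d+k+1) ≤ (-1) * (1-x) ^ (d+k+1) :=
          mul_le_mul_of_nonneg_right hx3 (pow_nonneg (by linarith) _)
      _ ≤ -(2 ^ (k+1) * (-x) ^ d) := by nlinarith
  have hnxd : (1:ℝ) ≤ (-x) ^ d := one_le_pow₀ (by linarith)
  have h2k : (2:ℝ) ^ k ≤ 2 ^ (k+1) := by
    apply pow_le_pow_right₀ (by norm_num); omega
  nlinarith [hk, hnxd, heval, hrab, h2k]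
end

section
/- Let f ∈ ℱ₁ and ε > 0. Then there exists a real polynomial p satisfying (i) sup_{x∈[0,1]} |p(x) − f(x)| < ε, (ii) 0 < p(x) < 1 for all x ∈ (0,1), (iii) p(0) = 0, and (iv) p(1) = 1. -/
/-!
Take for `p` a Bernstein approximation `Bₙ f`, which converges uniformly to `f` and interpolates
`f` at `0` and `1`. Since `f ≥ 0` and `f 1 = 1`, inside `(0, 1)` we have `Bₙ f x ≥ xⁿ > 0`; and
`1 - Bₙ f = Bₙ (1 - f)` with `1 - f ≥ 0` and `1 - f 0 = 1` gives `Bₙ f x < 1` in the same way.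
-/

open Polynomial unitInterval

namespace bernsteinApproximation

theorem exists_polynomial_eval_eq (n : ℕ) (F : C(I, ℝ)) :
    ∃ p : ℝ[X], ∀ x : I, p.eval (x : ℝ) = bernsteinApproximation n F x :=
  ⟨∑ k : Fin (n + 1), C (F (bernstein.z k)) * bernsteinPolynomial ℝ n k, fun x => by
    simp [apply, eval_finsetSum, bernstein, mul_comm]⟩

theorem one_sub_apply (n : ℕ) (F : C(I, ℝ)) (x : I) :
    bernsteinApproximation n (1 - F) x = 1 - bernsteinApproximation n F x := by
  simp [apply, mul_sub, Finset.sum_sub_distrib]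

theorem pos_of_nonneg {n : ℕ} {F : C(I, ℝ)} (hF : 0 ≤ F) (k : Fin (n + 1))
    (hk : 0 < F (bernstein.z k)) {x : I} (hx : (x : ℝ) ∈ Set.Ioo 0 1) :
    0 < bernsteinApproximation n F x := by
  have hbk : 0 < bernstein n k x := by
    have hx₀ : 0 < (x : ℝ) := hx.1
    have hx₁ : 0 < 1 - (x : ℝ) := sub_pos.2 hx.2
    have hchoose := Nat.choose_pos k.is_le
    rw [bernstein_apply]
    positivity
  calc 0 < bernstein n k x • F (bernstein.z k) := smul_pos hbk hk
    _ ≤ ∑ j : Fin (n + 1), bernstein n j x • F (bernstein.z j) :=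
      Finset.single_le_sum (fun j _ => smul_nonneg bernstein_nonneg (hF (bernstein.z j)))
        (Finset.mem_univ k)
    _ = bernsteinApproximation n F x := (apply n F x).symm

end bernsteinApproximation

open bernsteinApproximation in
theorem stmt_11 (f : ℝ → ℝ) (hf : ContinuousOn f (Set.Icc (0:ℝ) 1))
    (hf0 : f 0 = 0) (hf1 : f 1 = 1)
    (hf01 : ∀ x ∈ Set.Icc (0:ℝ) 1, f x ∈ Set.Icc (0:ℝ) 1)
    (ε : ℝ) (hε : 0 < ε) :
    ∃ p : Polynomial ℝ,
      sSup ((fun x => |p.eval x - f x|) '' Set.Icc (0:ℝ) 1) < ε ∧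
      (∀ x ∈ Set.Ioo (0:ℝ) 1, p.eval x ∈ Set.Ioo (0:ℝ) 1) ∧
      p.eval 0 = 0 ∧ p.eval 1 = 1 := by
  set F : C(I, ℝ) := ⟨(Set.Icc (0:ℝ) 1).domRestrict f, hf.domRestrict⟩
  obtain ⟨N, hN⟩ := Metric.tendsto_atTop.1 (bernsteinApproximation_uniform F) (ε / 2) (half_pos hε)
  have hn : N + 1 ≠ 0 := N.succ_ne_zero
  obtain ⟨p, hp⟩ := exists_polynomial_eval_eq (N + 1) F
  have hF_zero : F 0 = 0 := hf0
  have hF_one : F 1 = 1 := hf1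
  have hF_nonneg : 0 ≤ F := fun x => (hf01 x x.2).1
  have hF_one_sub_nonneg : 0 ≤ 1 - F := fun x => sub_nonneg.2 (hf01 x x.2).2
  refine ⟨p, ?_, fun x hx => ⟨?_, ?_⟩, ?_, ?_⟩
  · have hle : ∀ x ∈ Set.Icc (0:ℝ) 1, |p.eval x - f x| ≤ ε / 2 := fun x hx =>
      calc |p.eval x - f x| = ‖(bernsteinApproximation (N + 1) F - F) ⟨x, hx⟩‖ := by
            rw [hp ⟨x, hx⟩]; rfl
        _ ≤ ‖bernsteinApproximation (N + 1) F - F‖ := ContinuousMap.norm_coe_le_norm _ _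
        _ = dist (bernsteinApproximation (N + 1) F) F := (dist_eq_norm _ _).symm
        _ ≤ ε / 2 := (hN _ N.le_succ).le
    exact (Real.sSup_le (Set.forall_mem_image.2 hle) (half_pos hε).le).trans_lt (half_lt_self hε)
  · rw [hp ⟨x, Set.Ioo_subset_Icc_self hx⟩]
    exact pos_of_nonneg hF_nonneg (Fin.last _) (by simp [bernstein.z_last hn, hF_one]) hx
  · rw [hp ⟨x, Set.Ioo_subset_Icc_self hx⟩, ← sub_pos, ← one_sub_apply]
    exact pos_of_nonneg hF_one_sub_nonneg 0 (by simp [hF_zero]) hx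
  · simpa [hF_zero] using hp 0
  · simpa [hF_one, hn] using hp 1
end

section
/- Let ε > 0 and let p be a real polynomial satisfying p(0) = 0, p(1) = 1, and 0 < p(x) < 1 for all x ∈ (0,1). Then there exists a real polynomial q satisfying (i) sup_{x∈[0,1]} |q(x) − p(x)| < ε, (ii) 0 < q(x) < 1 for all x ∈ (0,1), (iii) q(0) = 0, (iv) q(1) = 1, (v) q(x) < 0 for all x ∈ [−1, 0), and (vi) q(x) > 1 for all x ∈ (1, 2]. -/
open Polynomial

set_option maxHeartbeats 1600000 in
theorem stmt_12 (ε : ℝ) (hε : 0 < ε) (p : Polynomial ℝ)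
    (hp0 : p.eval 0 = 0) (hp1 : p.eval 1 = 1)
    (hp01 : ∀ x ∈ Set.Ioo (0:ℝ) 1, p.eval x ∈ Set.Ioo (0:ℝ) 1) :
    ∃ q : Polynomial ℝ,
      sSup ((fun x => |q.eval x - p.eval x|) '' Set.Icc (0:ℝ) 1) < ε ∧
      (∀ x ∈ Set.Ioo (0:ℝ) 1, q.eval x ∈ Set.Ioo (0:ℝ) 1) ∧
      q.eval 0 = 0 ∧ q.eval 1 = 1 ∧
      (∀ x ∈ Set.Ico (-1:ℝ) 0, q.eval x < 0) ∧
      (∀ x ∈ Set.Ioc (1:ℝ) 2, 1 < q.eval x) := by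
  obtain ⟨t, ht0, htε, ht1⟩ : ∃ t : ℝ, 0 < t ∧ t < ε ∧ t < 1 := by
    refine ⟨min ε 1 / 2, by positivity, ?_, ?_⟩
    · have := min_le_left ε 1; have := min_le_right ε 1
      rcases le_total ε 1 with h | h <;> simp [min_def, h] <;> linarith
    · have := min_le_right ε 1; linarith
  -- factor p = X * h and p - 1 = (X-1) * h1
  obtain ⟨h, hh⟩ : (X - C (0:ℝ)) ∣ p := (dvd_iff_isRoot).mpr hp0
  obtain ⟨h1, hh1⟩ : (X - C (1:ℝ)) ∣ (p - C 1) := by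
    apply (dvd_iff_isRoot).mpr
    simp [IsRoot, hp1]
  have hpx : ∀ x : ℝ, p.eval x = x * h.eval x := by
    intro x; rw [hh]; simp
  have hp1x : ∀ x : ℝ, p.eval x - 1 = (x - 1) * h1.eval x := by
    intro x
    have : (p - C 1).eval x = (x - 1) * h1.eval x := by rw [hh1]; simp
    simpa using this
  -- common bound
  obtain ⟨C1, hC1⟩ := (isCompact_Icc (a := (-1:ℝ)) (b := 2)).exists_bound_of_continuousOn
    (f := fun x => h.eval x) (Polynomial.continuous h).continuousOn
  obtain ⟨C2, hC2⟩ := (isCompact_Icc (a := (-1:ℝ)) (b := 2)).exists_bound_of_continuousOn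
    (f := fun x => h1.eval x) (Polynomial.continuous h1).continuousOn
  obtain ⟨C0, hC0⟩ : ∃ C0 : ℝ, ∀ x ∈ Set.Icc (-1:ℝ) 2, |h.eval x| ≤ C0 ∧ |h1.eval x| ≤ C0 := by
    refine ⟨max C1 C2, fun x hx => ⟨?_, ?_⟩⟩
    · exact le_trans (by simpa using hC1 x hx) (le_max_left _ _)
    · exact le_trans (by simpa using hC2 x hx) (le_max_right _ _)
  obtain ⟨n, hn⟩ := exists_nat_gt ((1 - t) * C0 / t)
  have hnt : (1 - t) * C0 < t * (2 * n + 1) := by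
    have h1' : (1 - t) * C0 < t * n := by
      rw [div_lt_iff₀ ht0] at hn; linarith [hn]
    nlinarith [ht0.le, (Nat.cast_nonneg n : (0:ℝ) ≤ n)]
  obtain ⟨g, hgval⟩ : ∃ g : Polynomial ℝ, ∀ x : ℝ, g.eval x = ((2*x - 1)^(2*n+1) + 1) / 2 := by
    refine ⟨(C 2 * X - C 1) ^ (2 * n + 1) * C (1/2) + C (1/2), fun x => ?_⟩
    simp; ring
  refine ⟨C (1 - t) * p + C t * g, ?_, ?_, ?_, ?_, ?_, ?_⟩
  · -- sSup < ε
    refine lt_of_le_of_lt (csSup_le ⟨_, ⟨0, by norm_num, rfl⟩⟩ ?_) htε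
    rintro y ⟨x, hx, rfl⟩
    have hp_mem : 0 ≤ p.eval x ∧ p.eval x ≤ 1 := by
      rcases eq_or_lt_of_le hx.1 with h0 | h0
      · rw [← h0, hp0]; norm_num
      rcases eq_or_lt_of_le hx.2 with h1' | h1'
      · rw [h1', hp1]; norm_num
      · have := hp01 x ⟨h0, h1'⟩
        exact ⟨this.1.le, this.2.le⟩
    have hg_mem : 0 ≤ g.eval x ∧ g.eval x ≤ 1 := by
      rw [hgval]
      have habs : |2*x - 1| ≤ 1 := by
        rw [abs_le]; constructor <;> nlinarith [hx.1, hx.2]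
      have hpow : |(2*x-1)^(2*n+1)| ≤ 1 := by
        rw [abs_pow]; exact pow_le_one₀ (abs_nonneg _) habs
      rw [abs_le] at hpow
      constructor <;> nlinarith [hpow.1, hpow.2]
    have : (C (1 - t) * p + C t * g).eval x - p.eval x = t * (g.eval x - p.eval x) := by
      simp; ring
    show |(C (1 - t) * p + C t * g).eval x - p.eval x| ≤ t
    rw [this, abs_mul, abs_of_pos ht0]
    have : |g.eval x - p.eval x| ≤ 1 := by
      rw [abs_le]; constructor <;> linarith [hp_mem.1, hp_mem.2, hg_mem.1, hg_mem.2]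
    nlinarith [ht0]
  · -- Ioo
    intro x hx
    have hpm := hp01 x hx
    have hg_mem : 0 < g.eval x ∧ g.eval x < 1 := by
      rw [hgval]
      have habs : |2*x - 1| < 1 := by
        rw [abs_lt]; constructor <;> nlinarith [hx.1, hx.2]
      have hpow : |(2*x-1)^(2*n+1)| < 1 := by
        rw [abs_pow]; exact pow_lt_one₀ (abs_nonneg _) habs (by omega)
      rw [abs_lt] at hpow
      constructor <;> nlinarith [hpow.1, hpow.2]
    constructor
    · simp only [eval_add, eval_mul, eval_C]
      nlinarith [hpm.1, hg_mem.1, ht0, ht1]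
    · simp only [eval_add, eval_mul, eval_C]
      nlinarith [hpm.2, hg_mem.2, ht0, ht1]
  · -- eval 0
    have : g.eval 0 = 0 := by
      rw [hgval]
      have : ((2:ℝ)*0 - 1)^(2*n+1) = -1 := by
        norm_num
        exact Odd.neg_one_pow ⟨n, rfl⟩
      rw [this]; ring
    simp [hp0, this]
  · -- eval 1
    have : g.eval 1 = 1 := by
      rw [hgval]; norm_num
    simp [hp1, this]
  · -- Ico (-1) 0
    intro x hx
    obtain ⟨hx1, hx0⟩ := hx
    have hb : 1 + ((2*n+1 : ℕ) : ℝ) * (-2*x) ≤ (1 + (-2*x))^(2*n+1) :=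
      one_add_mul_le_pow (by linarith) _
    have hodd : (2*x-1)^(2*n+1) = -((1-2*x)^(2*n+1)) := by
      rw [show (2*x-1) = -(1-2*x) by ring, Odd.neg_pow ⟨n, by ring⟩]
    have hgle : g.eval x ≤ (2*n+1) * x := by
      rw [hgval, hodd]
      push_cast at hb
      have : (1 + (-2*x)) = (1 - 2*x) := by ring
      rw [this] at hb
      nlinarith [hb]
    have hCx := hC0 x ⟨by linarith, by linarith⟩
    have hph : p.eval x ≤ (-x) * C0 := by
      rw [hpx]
      nlinarith [mul_nonneg (by linarith : (0:ℝ) ≤ -x)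
        (by linarith [(abs_le.mp hCx.1).1] : (0:ℝ) ≤ C0 + h.eval x)]
    simp only [eval_add, eval_mul, eval_C]
    have h1' : (1 - t) * p.eval x ≤ (1 - t) * ((-x) * C0) := by
      apply mul_le_mul_of_nonneg_left hph (by linarith)
    have h2' : t * g.eval x ≤ t * ((2*n+1) * x) := by
      apply mul_le_mul_of_nonneg_left hgle ht0.le
    nlinarith [h1', h2', mul_pos (show (0:ℝ) < -x by linarith)
      (show (0:ℝ) < t * (2*(n:ℝ)+1) - (1-t)*C0 by linarith)]
  · -- Ioc 1 2
    intro x hx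
    obtain ⟨hx1, hx2⟩ := hx
    have hb : 1 + ((2*n+1 : ℕ) : ℝ) * (2*x - 2) ≤ (1 + (2*x-2))^(2*n+1) :=
      one_add_mul_le_pow (by linarith) _
    have hgge : 1 + (2*n+1) * (x-1) ≤ g.eval x := by
      rw [hgval]
      push_cast at hb
      have : (1 + (2*x-2)) = (2*x - 1) := by ring
      rw [this] at hb
      nlinarith [hb]
    have hCx := hC0 x ⟨by linarith, by linarith⟩
    have hph : -( (x-1) * C0) ≤ p.eval x - 1 := by
      rw [hp1x]
      nlinarith [mul_nonneg (by linarith : (0:ℝ) ≤ x - 1)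
        (by linarith [(abs_le.mp hCx.2).1] : (0:ℝ) ≤ C0 + h1.eval x)]
    simp only [eval_add, eval_mul, eval_C]
    have h1' : (1 - t) * (-( (x-1) * C0)) ≤ (1 - t) * (p.eval x - 1) := by
      apply mul_le_mul_of_nonneg_left hph (by linarith)
    have h2' : t * (1 + (2*n+1) * (x-1)) ≤ t * g.eval x := by
      apply mul_le_mul_of_nonneg_left hgge ht0.le
    nlinarith [h1', h2', mul_pos (show (0:ℝ) < x - 1 by linarith)
      (show (0:ℝ) < t * (2*(n:ℝ)+1) - (1-t)*C0 by linarith)]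
end
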